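/- arXiv:1808.09678 — 4 statements merged into one kernel-verified Lean document; each statement's English description precedes it below -/
import Mathlib

section
/- Under condition (T), for every coordinate i ∈ {1, …, d} and every α with 0 < α < α̃_i, the stationary solution satisfies E[W_i^α] < ∞. -/
open MeasureTheory ProbabilityTheory Filter Matrix Set
open scoped ENNReal Topology

namespace TriSRE

variable {Ω : Type*} [MeasurableSpace Ω]

/-- Condition (T) of Matsui–Świątkowski for a random matrix `A` and random vector `B`,
with tail indices `α`. -/
structure CondT {d : ℕ} (μ : Measure Ω)
    (A : Ω → Matrix (Fin d) (Fin d) ℝ) (B : Ω → Fin d → ℝ) (α : Fin d → ℝ) : Prop where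
  measA : ∀ i j, Measurable fun ω => A ω i j
  measB : ∀ i, Measurable fun ω => B ω i
  /-- (T-1) nonnegative entries -/
  nonnegA : ∀ i j, ∀ᵐ ω ∂μ, 0 ≤ A ω i j
  nonnegB : ∀ i, ∀ᵐ ω ∂μ, 0 ≤ B ω i
  /-- (T-2) -/
  B_ne_zero : ∀ i, μ {ω | B ω i = 0} < 1
  /-- (T-3) upper triangular -/
  upperTriangular : ∀ i j, j < i → ∀ᵐ ω ∂μ, A ω i j = 0
  /-- (T-4) -/
  alpha_pos : ∀ i, 0 < α i
  alpha_injective : ∀ i j, i ≠ j → α i ≠ α j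
  diag_moment_one : ∀ i, ∫ ω, A ω i i ^ α i ∂μ = 1
  /-- (T-5) -/
  A_moment : ∀ i j, Integrable (fun ω => A ω i j ^ α i) μ
  /-- (T-6) -/
  B_moment : ∀ i, Integrable (fun ω => B ω i ^ α i) μ
  /-- (T-7) -/
  log_moment : ∀ i, Integrable (fun ω => A ω i i ^ α i * max (Real.log (A ω i i)) 0) μ
  /-- (T-8) the conditional law of `log A i i` on `{A i i > 0}` is non-arithmetic,
  i.e. not concentrated on any lattice `c ℤ`. -/
  nonarithmetic : ∀ i, ∀ c : ℝ,
    μ {ω | 0 < A ω i i ∧ ∀ k : ℤ, Real.log (A ω i i) ≠ c * k} ≠ 0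

/-- `i ⪯ j` : `i` directly depends on `j` (the entry `A i j` is positive with
positive probability). -/
def DirectDep {d : ℕ} (μ : Measure Ω) (A : Ω → Matrix (Fin d) (Fin d) ℝ)
    (i j : Fin d) : Prop :=
  0 < μ {ω | 0 < A ω i j}

/-- `i ⊴ j` : `i` depends on `j` (a chain of direct dependencies from `i` to `j`). -/
def Dep {d : ℕ} (μ : Measure Ω) (A : Ω → Matrix (Fin d) (Fin d) ℝ) :
    Fin d → Fin d → Prop :=
  Relation.ReflTransGen (DirectDep μ A)

/-- the modified tail index `α̃ i = min {α j : i ⊴ j}`. -/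
noncomputable def tildeAlpha {d : ℕ} (μ : Measure Ω) (A : Ω → Matrix (Fin d) (Fin d) ℝ)
    (α : Fin d → ℝ) (i : Fin d) : ℝ :=
  sInf {a : ℝ | ∃ j, Dep μ A i j ∧ a = α j}

/-!
Downward induction on the coordinate. Since `A` is upper triangular, the `i`-th row of
`W = A W + B` gives, in law, `|W i| ≤ A i i |W i| + R i`, where `A i i` is independent of `W i`
and `R i` involves only `B i` and the coordinates `j > i` on which `i` depends; so `R i` has a
finite `a`-th moment by induction and independence. For `a < α i`, the weighted AM-GM inequality
`x ^ a ≤ (a / α i) x ^ α i + 1 - a / α i`, strict for `x ≠ 1`, together with `E[A i i ^ α i] = 1`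
and non-arithmeticity (`A i i ≢ 1`) gives `ρ := E[A i i ^ a] < 1`. The truncated moments
`G c = E[min (|W i| ^ a) c]` then satisfy `G c ^ (1/p) ≤ ρ ^ (1/p) G (c / ρ) ^ (1/p) + K` with
`p = max 1 a` (subadditivity of `x ↦ x ^ a` for `a ≤ 1`, Minkowski for `a ≥ 1`). Iterating, and
using that `ρ ^ n G (c / ρ ^ n) → 0` because `|W i|` is finite, bounds `G` uniformly, so
`E |W i| ^ a < ∞`.
-/

theorem rpow_le_div_mul_rpow_add_one_sub {x a b : ℝ} (hx : 0 ≤ x) (ha : 0 < a) (hab : a < b) :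
    x ^ a ≤ a / b * x ^ b + (1 - a / b) ∧ (x ≠ 1 → x ^ a < a / b * x ^ b + (1 - a / b)) := by
  have hb : 0 < b := ha.trans hab
  have hθ0 : 0 < a / b := div_pos ha hb
  have hθ1 : a / b < 1 := (div_lt_one hb).2 hab
  have hpow : x ^ a = (1 + (x ^ b - 1)) ^ (a / b) := by
    rw [add_sub_cancel, ← Real.rpow_mul hx, mul_div_cancel₀ _ hb.ne']
  have hs : -1 ≤ x ^ b - 1 := by linarith [Real.rpow_nonneg hx b]
  refine ⟨?_, fun hx1 => ?_⟩
  · rw [hpow]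
    linarith [rpow_one_add_le_one_add_mul_self hs hθ0.le hθ1.le]
  · have hs0 : x ^ b - 1 ≠ 0 := by
      rw [sub_ne_zero, ← Real.one_rpow b]
      exact fun h => hx1 ((Real.rpow_left_inj hx zero_le_one hb.ne').1 h)
    rw [hpow]
    linarith [rpow_one_add_lt_one_add_mul_self hs hs0 hθ0 hθ1]

theorem le_mul_inv_one_sub_of_le_mul_add {M : Type*} [Monoid M] {F : M → ℝ≥0∞} {l K : ℝ≥0∞}
    {τ : M} (hF : ∀ x, F x ≤ l * F (τ * x) + K) {x : M}
    (hlim : Tendsto (fun n : ℕ => l ^ n * F (τ ^ n * x)) atTop (𝓝 0)) :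
    F x ≤ K * (1 - l)⁻¹ := by
  have hiter (n : ℕ) : F x ≤ l ^ n * F (τ ^ n * x) + K * ∑ k ∈ Finset.range n, l ^ k := by
    induction n with
    | zero => simp
    | succ n ih =>
      calc F x ≤ l ^ n * (l * F (τ * (τ ^ n * x)) + K) + K * ∑ k ∈ Finset.range n, l ^ k := by
            grw [ih, hF (τ ^ n * x)]
        _ = l ^ (n + 1) * F (τ ^ (n + 1) * x) + K * ∑ k ∈ Finset.range (n + 1), l ^ k := by
            rw [pow_succ' τ, mul_assoc, Finset.sum_range_succ]; ring
  refine ge_of_tendsto (by simpa using hlim.add_const (K * (1 - l)⁻¹)) (.of_forall fun n => ?_)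
  grw [hiter n, ENNReal.sum_le_tsum, ENNReal.tsum_geometric]

theorem min_rpow_eq_rpow_min {a : ℝ} (ha : 0 < a) (x c : ℝ≥0∞) :
    min (x ^ a) c = min x (c ^ a⁻¹) ^ a := by
  rw [(ENNReal.monotone_rpow_of_nonneg ha.le).map_min, ENNReal.rpow_inv_rpow ha.ne']

section Moments

variable {μ : Measure Ω}

theorem lintegral_enorm_rpow_lt_one [IsProbabilityMeasure μ] {f : Ω → ℝ} (hf0 : 0 ≤ᵐ[μ] f)
    {a b : ℝ} (ha : 0 < a) (hab : a < b) (hint : Integrable (fun ω => f ω ^ b) μ)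
    (hmom : ∫ ω, f ω ^ b ∂μ = 1) (hne : μ {ω | f ω ≠ 1} ≠ 0) :
    ∫⁻ ω, ‖f ω‖ₑ ^ a ∂μ < 1 := by
  set g : Ω → ℝ := fun ω => a / b * f ω ^ b + (1 - a / b)
  have hg : Integrable g μ := (hint.const_mul _).add (integrable_const _)
  have hg_pos : ∀ᵐ ω ∂μ, 0 < g ω := by
    filter_upwards [hf0] with ω hω
    have hθ1 : 0 < 1 - a / b := sub_pos.2 ((div_lt_one (ha.trans hab)).2 hab)
    exact add_pos_of_nonneg_of_pos
      (mul_nonneg (div_pos ha (ha.trans hab)).le (Real.rpow_nonneg hω b)) hθ1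
  have hg1 : ∫⁻ ω, ENNReal.ofReal (g ω) ∂μ = 1 := by
    rw [← ofReal_integral_eq_lintegral_ofReal hg (hg_pos.mono fun _ h => h.le),
      integral_add (hint.const_mul _) (integrable_const _), integral_const_mul, hmom]
    simp
  have hf_ofReal : ∀ᵐ ω ∂μ, ‖f ω‖ₑ ^ a = ENNReal.ofReal (f ω ^ a) := by
    filter_upwards [hf0] with ω hω
    rw [Real.enorm_eq_ofReal hω, ENNReal.ofReal_rpow_of_nonneg hω ha.le]
  have hle : (fun ω => ‖f ω‖ₑ ^ a) ≤ᵐ[μ] fun ω => ENNReal.ofReal (g ω) := by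
    filter_upwards [hf0, hf_ofReal] with ω hω hω'
    rw [hω']
    exact ENNReal.ofReal_le_ofReal (rpow_le_div_mul_rpow_add_one_sub hω ha hab).1
  calc ∫⁻ ω, ‖f ω‖ₑ ^ a ∂μ < ∫⁻ ω, ENNReal.ofReal (g ω) ∂μ := by
        refine lintegral_strict_mono_of_ae_le_of_ae_lt_on hg.aemeasurable.ennreal_ofReal
          ((lintegral_mono_ae hle).trans_lt (by simp [hg1])).ne hle hne ?_
        filter_upwards [hf0, hf_ofReal, hg_pos] with ω hω hω' hgω hω1
        rw [hω', ENNReal.ofReal_lt_ofReal_iff hgω]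
        exact (rpow_le_div_mul_rpow_add_one_sub hω ha hab).2 hω1
    _ = 1 := hg1

theorem lintegral_enorm_rpow_lt_top [IsFiniteMeasure μ] {f : Ω → ℝ} (hf0 : 0 ≤ᵐ[μ] f)
    {a b : ℝ} (ha : 0 ≤ a) (hab : a ≤ b) (hint : Integrable (fun ω => f ω ^ b) μ) :
    ∫⁻ ω, ‖f ω‖ₑ ^ a ∂μ < ∞ := by
  have hb : ∫⁻ ω, ‖f ω‖ₑ ^ b ∂μ < ∞ := by
    refine (lintegral_congr_ae ?_).trans_lt hint.lintegral_lt_top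
    filter_upwards [hf0] with ω hω
    rw [Real.enorm_eq_ofReal hω, ENNReal.ofReal_rpow_of_nonneg hω (ha.trans hab)]
  calc ∫⁻ ω, ‖f ω‖ₑ ^ a ∂μ ≤ ∫⁻ ω, (1 + ‖f ω‖ₑ ^ b) ∂μ := by
        refine lintegral_mono fun ω => ?_
        rcases le_total ‖f ω‖ₑ 1 with h | h
        · exact (ENNReal.rpow_le_one h ha).trans le_self_add
        · exact (ENNReal.rpow_le_rpow_of_exponent_le h hab).trans le_add_self
    _ < ∞ := by
        rw [lintegral_add_left measurable_const]
        exact ENNReal.add_lt_top.2 ⟨by simp, hb⟩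

/-- `(∫ f ^ a) ^ (1 / max 1 a)`: the `L^a` norm when `a ≥ 1`, the `a`-th moment itself when
`a ≤ 1`; in both regimes it is subadditive. -/
noncomputable def momentNorm (μ : Measure Ω) (a : ℝ) (f : Ω → ℝ≥0∞) : ℝ≥0∞ :=
  (∫⁻ ω, f ω ^ a ∂μ) ^ (max 1 a)⁻¹

theorem momentNorm_lt_top_iff {a : ℝ} {f : Ω → ℝ≥0∞} :
    momentNorm μ a f < ∞ ↔ ∫⁻ ω, f ω ^ a ∂μ < ∞ := by
  have : 0 < (max 1 a)⁻¹ := by positivity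
  simp [momentNorm, ENNReal.rpow_lt_top_iff_of_pos this]

theorem momentNorm_add_le {a : ℝ} (ha : 0 < a) {f g : Ω → ℝ≥0∞} (hf : AEMeasurable f μ)
    (hg : AEMeasurable g μ) :
    momentNorm μ a (f + g) ≤ momentNorm μ a f + momentNorm μ a g := by
  rcases le_total a 1 with ha1 | ha1
  · simp only [momentNorm, max_eq_left ha1, inv_one, ENNReal.rpow_one]
    calc ∫⁻ ω, (f + g) ω ^ a ∂μ ≤ ∫⁻ ω, (f ω ^ a + g ω ^ a) ∂μ :=
          lintegral_mono fun ω => ENNReal.rpow_add_le_add_rpow _ _ ha.le ha1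
      _ = _ := lintegral_add_left' (hf.pow_const a) _
  · simpa only [momentNorm, max_eq_right ha1, one_div] using
      ENNReal.lintegral_Lp_add_le hf hg ha1

theorem momentNorm_sum_le {ι : Type*} {a : ℝ} (ha : 0 < a) (s : Finset ι)
    {f : ι → Ω → ℝ≥0∞} (hf : ∀ i ∈ s, AEMeasurable (f i) μ) :
    momentNorm μ a (∑ i ∈ s, f i) ≤ ∑ i ∈ s, momentNorm μ a (f i) :=
  Finset.le_sum_of_subadditive_on_pred _ (fun g => AEMeasurable g μ)
    (by simp [momentNorm, ENNReal.zero_rpow_of_pos ha])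
    (fun _ _ hf hg => momentNorm_add_le ha hf hg) (fun _ _ hf hg => hf.add hg) f hf

theorem lintegral_rpow_add_lt_top {a : ℝ} (ha : 0 < a) {f g : Ω → ℝ≥0∞}
    (hf : AEMeasurable f μ) (hg : AEMeasurable g μ) (hf_lt : ∫⁻ ω, f ω ^ a ∂μ < ∞)
    (hg_lt : ∫⁻ ω, g ω ^ a ∂μ < ∞) :
    ∫⁻ ω, (f ω + g ω) ^ a ∂μ < ∞ :=
  momentNorm_lt_top_iff.1 <| (momentNorm_add_le ha hf hg).trans_lt <|
    ENNReal.add_lt_top.2 ⟨momentNorm_lt_top_iff.2 hf_lt, momentNorm_lt_top_iff.2 hg_lt⟩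

theorem lintegral_rpow_sum_lt_top {ι : Type*} {a : ℝ} (ha : 0 < a) (s : Finset ι)
    {f : ι → Ω → ℝ≥0∞} (hf : ∀ i ∈ s, AEMeasurable (f i) μ)
    (hf_lt : ∀ i ∈ s, ∫⁻ ω, f i ω ^ a ∂μ < ∞) :
    ∫⁻ ω, (∑ i ∈ s, f i ω) ^ a ∂μ < ∞ := by
  simp_rw [← Finset.sum_apply]
  exact momentNorm_lt_top_iff.1 <| (momentNorm_sum_le ha s hf).trans_lt <|
    ENNReal.sum_lt_top.2 fun i hi => momentNorm_lt_top_iff.2 (hf_lt i hi)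

theorem lintegral_min_mul_le_of_indepFun [IsProbabilityMeasure μ] {U V : Ω → ℝ≥0∞}
    (hU : Measurable U) (hV : Measurable V) (hUV : IndepFun U V μ) {ρ : ℝ≥0∞}
    (hρ : ∫⁻ ω, U ω ∂μ ≤ ρ) (c : ℝ≥0∞) :
    ∫⁻ ω, min (U ω * V ω) c ∂μ ≤ ∫⁻ ω, min (ρ * V ω) c ∂μ := by
  have hmap : μ.map (fun ω => (V ω, U ω)) = (μ.map V).prod (μ.map U) :=
    (indepFun_iff_map_prod_eq_prod_map_map hV.aemeasurable hU.aemeasurable).1 hUV.symm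
  have hmeas : Measurable fun p : ℝ≥0∞ × ℝ≥0∞ => min (p.2 * p.1) c := by fun_prop
  have : IsProbabilityMeasure (μ.map U) := Measure.isProbabilityMeasure_map hU.aemeasurable
  calc ∫⁻ ω, min (U ω * V ω) c ∂μ
      = ∫⁻ v, ∫⁻ u, min (u * v) c ∂(μ.map U) ∂(μ.map V) := by
        rw [← lintegral_prod _ hmeas.aemeasurable, ← hmap, lintegral_map hmeas (by fun_prop)]
    _ ≤ ∫⁻ v, min (ρ * v) c ∂(μ.map V) := by
        refine lintegral_mono fun v => le_min ?_ ?_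
        · calc ∫⁻ u, min (u * v) c ∂(μ.map U) ≤ ∫⁻ u, u * v ∂(μ.map U) :=
                lintegral_mono fun _ => min_le_left _ _
            _ = (∫⁻ ω, U ω ∂μ) * v := by
                rw [lintegral_mul_const v measurable_id', lintegral_map measurable_id' hU]
            _ ≤ ρ * v := by gcongr
        · exact (lintegral_mono fun _ => min_le_right _ _).trans_eq (by simp)
    _ = ∫⁻ ω, min (ρ * V ω) c ∂μ := lintegral_map (by fun_prop) hV

noncomputable def truncMoment (μ : Measure Ω) (a : ℝ) (X : Ω → ℝ≥0∞) (c : ℝ≥0∞) : ℝ≥0∞ :=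
  ∫⁻ ω, min (X ω ^ a) c ∂μ

theorem mul_truncMoment_inv_mul {a : ℝ} (X : Ω → ℝ≥0∞) {ρ : ℝ≥0∞} (hρ0 : ρ ≠ 0) (hρ : ρ ≠ ∞)
    (c : ℝ≥0∞) :
    ρ * truncMoment μ a X (ρ⁻¹ * c) = ∫⁻ ω, min (ρ * X ω ^ a) c ∂μ := by
  rw [truncMoment, ← lintegral_const_mul' _ _ hρ]
  simp_rw [mul_min, ← mul_assoc, ENNReal.mul_inv_cancel hρ0 hρ, one_mul]

theorem lintegral_rpow_eq_iSup_truncMoment {a : ℝ} {X : Ω → ℝ≥0∞} (hX : Measurable X) :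
    ∫⁻ ω, X ω ^ a ∂μ = ⨆ n : ℕ, truncMoment μ a X n := by
  calc ∫⁻ ω, X ω ^ a ∂μ = ∫⁻ ω, ⨆ n : ℕ, min (X ω ^ a) n ∂μ := by
        congr with ω
        exact (inf_top_eq _).symm.trans (by rw [← ENNReal.iSup_natCast, inf_iSup_eq])
    _ = ⨆ n : ℕ, truncMoment μ a X n := lintegral_iSup (fun n => by fun_prop)
          (fun m n hmn ω => min_le_min_left _ (by exact_mod_cast hmn))

theorem tendsto_pow_mul_truncMoment [IsFiniteMeasure μ] {a : ℝ} (ha : 0 ≤ a) {X : Ω → ℝ≥0∞}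
    (hX : Measurable X) (hX_fin : ∀ᵐ ω ∂μ, X ω ≠ ∞) {ρ : ℝ≥0∞} (hρ0 : ρ ≠ 0) (hρ1 : ρ < 1)
    {c : ℝ≥0∞} (hc : c ≠ ∞) :
    Tendsto (fun n : ℕ => ρ ^ n * truncMoment μ a X (ρ⁻¹ ^ n * c)) atTop (𝓝 0) := by
  simp_rw [← ENNReal.inv_pow, mul_truncMoment_inv_mul X (pow_ne_zero _ hρ0)
    (ENNReal.pow_ne_top hρ1.ne_top)]
  have hlim := tendsto_lintegral_of_dominated_convergence (fun _ => c) (f := 0)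
    (F := fun n ω => min (ρ ^ n * X ω ^ a) c) (fun n => by fun_prop)
    (fun n => .of_forall fun ω => min_le_right _ _)
    (by simpa using ENNReal.mul_ne_top hc (measure_ne_top μ univ)) ?_
  · simpa using hlim
  filter_upwards [hX_fin] with ω hω
  have := ENNReal.Tendsto.mul_const (b := X ω ^ a)
    (ENNReal.tendsto_pow_atTop_nhds_zero_of_lt_one hρ1) (.inr (ENNReal.rpow_ne_top_of_nonneg ha hω))
  simpa using this.min (tendsto_const_nhds (x := c))

theorem truncMoment_rpow_inv_le [IsProbabilityMeasure μ] {a : ℝ} (ha : 0 < a)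
    {X Y U R : Ω → ℝ≥0∞} (hX : Measurable X) (hU : Measurable U) (hR : Measurable R)
    (hXY : IdentDistrib X Y μ μ) (hle : ∀ᵐ ω ∂μ, Y ω ≤ U ω * X ω + R ω) (hUX : IndepFun U X μ)
    {ρ : ℝ≥0∞} (hρU : ∫⁻ ω, U ω ^ a ∂μ ≤ ρ) (hρ0 : ρ ≠ 0) (hρ : ρ ≠ ∞)
    (c : ℝ≥0∞) :
    truncMoment μ a X c ^ (max 1 a)⁻¹
      ≤ ρ ^ (max 1 a)⁻¹ * truncMoment μ a X (ρ⁻¹ * c) ^ (max 1 a)⁻¹ + momentNorm μ a R := by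
  have hp : 0 ≤ (max 1 a)⁻¹ := by positivity
  have hdom : truncMoment μ a X c ≤ ∫⁻ ω, (min (U ω * X ω) (c ^ a⁻¹) + R ω) ^ a ∂μ := by
    rw [show truncMoment μ a X c = ∫⁻ ω, min (Y ω ^ a) c ∂μ from
      (hXY.comp (u := fun x => min (x ^ a) c) (by fun_prop)).lintegral_eq]
    refine lintegral_mono_ae (hle.mono fun ω hω => ?_)
    rw [min_rpow_eq_rpow_min ha]
    gcongr
    exact (min_le_min_right _ hω).trans
      ((min_le_min_left _ le_self_add).trans_eq (min_add_add_right _ _ _))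
  have hUX_trunc : ∫⁻ ω, min (U ω * X ω) (c ^ a⁻¹) ^ a ∂μ ≤ ρ * truncMoment μ a X (ρ⁻¹ * c) := by
    simp only [← min_rpow_eq_rpow_min ha, ENNReal.mul_rpow_of_nonneg _ _ ha.le,
      mul_truncMoment_inv_mul X hρ0 hρ]
    exact lintegral_min_mul_le_of_indepFun (hU.pow_const a) (hX.pow_const a)
      (hUX.comp (measurable_id.pow_const a) (measurable_id.pow_const a)) hρU c
  calc truncMoment μ a X c ^ (max 1 a)⁻¹
      ≤ momentNorm μ a ((fun ω => min (U ω * X ω) (c ^ a⁻¹)) + R) :=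
        ENNReal.rpow_le_rpow hdom hp
    _ ≤ momentNorm μ a (fun ω => min (U ω * X ω) (c ^ a⁻¹)) + momentNorm μ a R :=
        momentNorm_add_le ha (by fun_prop) hR.aemeasurable
    _ ≤ ρ ^ (max 1 a)⁻¹ * truncMoment μ a X (ρ⁻¹ * c) ^ (max 1 a)⁻¹ + momentNorm μ a R := by
        grw [momentNorm, hUX_trunc, ENNReal.mul_rpow_of_nonneg _ _ hp]

theorem lintegral_rpow_lt_top_of_le_mul_add [IsProbabilityMeasure μ] {a : ℝ} (ha : 0 < a)
    {X Y U R : Ω → ℝ≥0∞} (hX : Measurable X) (hU : Measurable U) (hR : Measurable R)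
    (hX_fin : ∀ᵐ ω ∂μ, X ω ≠ ∞) (hXY : IdentDistrib X Y μ μ)
    (hle : ∀ᵐ ω ∂μ, Y ω ≤ U ω * X ω + R ω) (hUX : IndepFun U X μ)
    (hU_lt : ∫⁻ ω, U ω ^ a ∂μ < 1) (hR_lt : ∫⁻ ω, R ω ^ a ∂μ < ∞) :
    ∫⁻ ω, X ω ^ a ∂μ < ∞ := by
  set p := max 1 a
  have hp : 0 < p⁻¹ := by positivity
  -- Any `ρ < 1` above `E[U ^ a]` will do; keeping it away from `0` lets us divide by it.
  set ρ := max (∫⁻ ω, U ω ^ a ∂μ) 2⁻¹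
  have hρ0 : ρ ≠ 0 := (lt_max_of_lt_right (by norm_num)).ne'
  have hρ1 : ρ < 1 := max_lt hU_lt (by norm_num)
  have hlim (c : ℝ≥0∞) (hc : c ≠ ∞) : Tendsto (fun n : ℕ =>
      (ρ ^ p⁻¹) ^ n * truncMoment μ a X (ρ⁻¹ ^ n * c) ^ p⁻¹) atTop (𝓝 0) := by
    have h := ((ENNReal.continuous_rpow_const (y := p⁻¹)).tendsto 0).comp
      (tendsto_pow_mul_truncMoment ha.le hX hX_fin hρ0 hρ1 hc)
    rw [Function.comp_def, ENNReal.zero_rpow_of_pos hp] at h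
    convert h using 2 with n
    rw [ENNReal.mul_rpow_of_nonneg _ _ hp.le, ← ENNReal.rpow_mul_natCast, mul_comm p⁻¹,
      ENNReal.rpow_natCast_mul]
  set C := momentNorm μ a R * (1 - ρ ^ p⁻¹)⁻¹
  have hC : C ≠ ∞ := ENNReal.mul_ne_top (momentNorm_lt_top_iff.2 hR_lt).ne
    (ENNReal.inv_ne_top.2 (tsub_pos_of_lt (ENNReal.rpow_lt_one hρ1 hp)).ne')
  have hbound (n : ℕ) : truncMoment μ a X n ≤ C ^ p :=
    (ENNReal.rpow_inv_le_iff (by positivity)).1 <| le_mul_inv_one_sub_of_le_mul_add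
      (truncMoment_rpow_inv_le ha hX hU hR hXY hle hUX (le_max_left _ _) hρ0 hρ1.ne_top)
      (hlim n (ENNReal.natCast_ne_top n))
  rw [lintegral_rpow_eq_iSup_truncMoment hX]
  exact (iSup_le hbound).trans_lt (ENNReal.rpow_lt_top_of_nonneg (by positivity) hC)

end Moments

theorem enorm_mulVec_add_le {n : Type*} [Fintype n] [DecidableEq n] (M : Matrix n n ℝ)
    (w b : n → ℝ) (i : n) :
    ‖(M *ᵥ w + b) i‖ₑ
      ≤ ‖M i i‖ₑ * ‖w i‖ₑ + (∑ j ∈ Finset.univ.erase i, ‖M i j‖ₑ * ‖w j‖ₑ + ‖b i‖ₑ) := by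
  calc ‖(M *ᵥ w + b) i‖ₑ ≤ ∑ j, ‖M i j‖ₑ * ‖w j‖ₑ + ‖b i‖ₑ := by
        simp only [Pi.add_apply, mulVec, dotProduct, ← enorm_mul]
        exact (enorm_add_le _ _).trans (add_le_add_left (enorm_sum_le _ _) _)
    _ = _ := by
        rw [← Finset.add_sum_erase (f := fun j => ‖M i j‖ₑ * ‖w j‖ₑ) _ (Finset.mem_univ i),
          add_assoc]

section Triangular

variable {μ : Measure Ω} {d : ℕ} {A : Ω → Matrix (Fin d) (Fin d) ℝ} {B : Ω → Fin d → ℝ}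
  {α : Fin d → ℝ}

theorem tildeAlpha_le_of_dep {i j : Fin d} (h : Dep μ A i j) : tildeAlpha μ A α i ≤ α j :=
  csInf_le ((Set.finite_range α).subset (by rintro _ ⟨k, -, rfl⟩; exact ⟨k, rfl⟩)).bddBelow
    ⟨j, h, rfl⟩

theorem tildeAlpha_mono {i j : Fin d} (h : Dep μ A i j) :
    tildeAlpha μ A α i ≤ tildeAlpha μ A α j :=
  le_csInf ⟨α j, j, .refl, rfl⟩ (by rintro _ ⟨k, hk, rfl⟩; exact tildeAlpha_le_of_dep (h.trans hk))

theorem CondT.le_of_directDep (hT : CondT μ A B α) {i j : Fin d} (h : DirectDep μ A i j) :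
    i ≤ j := by
  by_contra! hji
  exact h.ne' (measure_mono_null (fun ω (hω : 0 < A ω i j) => hω.ne')
    (ae_iff.1 (hT.upperTriangular i j hji)))

theorem CondT.ae_eq_zero_of_not_directDep (hT : CondT μ A B α) {i j : Fin d}
    (h : ¬DirectDep μ A i j) : ∀ᵐ ω ∂μ, A ω i j = 0 := by
  have : ∀ᵐ ω ∂μ, ¬0 < A ω i j := ae_iff.2 (by simpa [DirectDep] using h)
  filter_upwards [this, hT.nonnegA i j] with ω h1 h2 using le_antisymm (not_lt.1 h1) h2

theorem CondT.lintegral_enorm_diag_rpow_lt_one [IsProbabilityMeasure μ] (hT : CondT μ A B α)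
    (i : Fin d) {a : ℝ} (ha : 0 < a) (haα : a < α i) : ∫⁻ ω, ‖A ω i i‖ₑ ^ a ∂μ < 1 := by
  refine lintegral_enorm_rpow_lt_one (hT.nonnegA i i) ha haα (hT.A_moment i i)
    (hT.diag_moment_one i) fun h0 => hT.nonarithmetic i 0 (measure_mono_null ?_ h0)
  rintro ω ⟨-, hlog⟩ (he : A ω i i = 1)
  exact hlog 0 (by simp [he])

theorem indepFun_entry_coord {W : Ω → Fin d → ℝ}
    (hWindep : IndepFun W (fun ω => (Matrix.of.symm (A ω), B ω)) μ) (i j k : Fin d)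
    {φ ψ : ℝ → ℝ≥0∞} (hφ : Measurable φ) (hψ : Measurable ψ) :
    IndepFun (fun ω => φ (A ω i j)) (fun ω => ψ (W ω k)) μ :=
  (hWindep.comp (hψ.comp (measurable_pi_apply k))
    (hφ.comp (f := fun p : (Fin d → Fin d → ℝ) × (Fin d → ℝ) => p.1 i j) (by fun_prop))).symm

theorem lintegral_entry_mul_coord_rpow (hT : CondT μ A B α) {W : Ω → Fin d → ℝ}
    (hWmeas : ∀ i, Measurable fun ω => W ω i)
    (hWindep : IndepFun W (fun ω => (Matrix.of.symm (A ω), B ω)) μ) (i j k : Fin d) {a : ℝ}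
    (ha : 0 ≤ a) :
    ∫⁻ ω, (‖A ω i j‖ₑ * ‖W ω k‖ₑ) ^ a ∂μ
      = (∫⁻ ω, ‖A ω i j‖ₑ ^ a ∂μ) * ∫⁻ ω, ‖W ω k‖ₑ ^ a ∂μ := by
  simp_rw [ENNReal.mul_rpow_of_nonneg _ _ ha]
  exact lintegral_mul_eq_lintegral_mul_lintegral_of_indepFun
    ((hT.measA i j).enorm.pow_const a) ((hWmeas k).enorm.pow_const a)
    (indepFun_entry_coord hWindep i j k (measurable_enorm.pow_const a)
      (measurable_enorm.pow_const a))

theorem CondT.lintegral_remainder_rpow_lt_top [IsProbabilityMeasure μ] (hT : CondT μ A B α)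
    {W : Ω → Fin d → ℝ} (hWmeas : ∀ i, Measurable fun ω => W ω i)
    (hWindep : IndepFun W (fun ω => (Matrix.of.symm (A ω), B ω)) μ) (i : Fin d)
    (ih : ∀ j, i < j → ∀ a : ℝ, 0 < a → a < tildeAlpha μ A α j → ∫⁻ ω, ‖W ω j‖ₑ ^ a ∂μ < ∞)
    {a : ℝ} (ha : 0 < a) (haα : a < tildeAlpha μ A α i) :
    ∫⁻ ω, (∑ j ∈ Finset.univ.erase i, ‖A ω i j‖ₑ * ‖W ω j‖ₑ + ‖B ω i‖ₑ) ^ a ∂μ < ∞ := by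
  have haα' : a < α i := haα.trans_le (tildeAlpha_le_of_dep .refl)
  have hterm (j : Fin d) (hj : j ∈ Finset.univ.erase i) :
      ∫⁻ ω, (‖A ω i j‖ₑ * ‖W ω j‖ₑ) ^ a ∂μ < ∞ := by
    rw [lintegral_entry_mul_coord_rpow hT hWmeas hWindep i j j ha.le]
    by_cases hdep : DirectDep μ A i j
    · have hij : i < j := (hT.le_of_directDep hdep).lt_of_ne (Finset.ne_of_mem_erase hj).symm
      exact ENNReal.mul_lt_top
        (lintegral_enorm_rpow_lt_top (hT.nonnegA i j) ha.le haα'.le (hT.A_moment i j))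
        (ih j hij a ha (haα.trans_le (tildeAlpha_mono (.single hdep))))
    · rw [lintegral_congr_ae ((hT.ae_eq_zero_of_not_directDep hdep).mono fun ω h =>
        show ‖A ω i j‖ₑ ^ a = 0 by simp [h, ENNReal.zero_rpow_of_pos ha])]
      simp
  have hmeas (j : Fin d) : AEMeasurable (fun ω => ‖A ω i j‖ₑ * ‖W ω j‖ₑ) μ :=
    ((hT.measA i j).enorm.mul (hWmeas j).enorm).aemeasurable
  exact lintegral_rpow_add_lt_top ha (Finset.aemeasurable_fun_sum _ fun j _ => hmeas j)
    (hT.measB i).enorm.aemeasurable (lintegral_rpow_sum_lt_top ha _ (fun j _ => hmeas j) hterm)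
    (lintegral_enorm_rpow_lt_top (hT.nonnegB i) ha.le haα'.le (hT.B_moment i))

theorem CondT.measurable_mulVec_add (hT : CondT μ A B α) {W : Ω → Fin d → ℝ}
    (hWmeas : ∀ i, Measurable fun ω => W ω i) : Measurable fun ω => A ω *ᵥ W ω + B ω := by
  refine measurable_pi_lambda _ fun k => ?_
  simp only [Pi.add_apply, mulVec, dotProduct]
  exact (Finset.measurable_sum _ fun j _ => (hT.measA k j).mul (hWmeas j)).add (hT.measB k)

theorem CondT.lintegral_enorm_coord_rpow_lt_top [IsProbabilityMeasure μ] (hT : CondT μ A B α)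
    {W : Ω → Fin d → ℝ} (hWmeas : ∀ i, Measurable fun ω => W ω i)
    (hWindep : IndepFun W (fun ω => (Matrix.of.symm (A ω), B ω)) μ)
    (hWfix : μ.map W = μ.map (fun ω => A ω *ᵥ W ω + B ω)) (i : Fin d)
    (ih : ∀ j, i < j → ∀ a : ℝ, 0 < a → a < tildeAlpha μ A α j → ∫⁻ ω, ‖W ω j‖ₑ ^ a ∂μ < ∞)
    {a : ℝ} (ha : 0 < a) (haα : a < tildeAlpha μ A α i) :
    ∫⁻ ω, ‖W ω i‖ₑ ^ a ∂μ < ∞ := by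
  have hlaw : IdentDistrib W (fun ω => A ω *ᵥ W ω + B ω) μ μ :=
    ⟨(measurable_pi_lambda _ hWmeas).aemeasurable,
      (hT.measurable_mulVec_add hWmeas).aemeasurable, hWfix⟩
  exact lintegral_rpow_lt_top_of_le_mul_add ha (hWmeas i).enorm (hT.measA i i).enorm
    ((Finset.measurable_sum _ fun j _ => (hT.measA i j).enorm.mul (hWmeas j).enorm).add
      (hT.measB i).enorm)
    (.of_forall fun _ => enorm_ne_top) (hlaw.comp (measurable_pi_apply i).enorm)
    (.of_forall fun ω => enorm_mulVec_add_le (A ω) (W ω) (B ω) i)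
    (indepFun_entry_coord hWindep i i i measurable_enorm measurable_enorm)
    (hT.lintegral_enorm_diag_rpow_lt_one i ha (haα.trans_le (tildeAlpha_le_of_dep .refl)))
    (hT.lintegral_remainder_rpow_lt_top hWmeas hWindep i ih ha haα)

end Triangular

theorem moments_below_tilde_index_general
    (μ : Measure Ω) [IsProbabilityMeasure μ]
    {d : ℕ}
    (A : Ω → Matrix (Fin d) (Fin d) ℝ) (B : Ω → Fin d → ℝ) (α : Fin d → ℝ)
    (hT : CondT μ A B α)
    (W : Ω → Fin d → ℝ) (hWmeas : ∀ i, Measurable fun ω => W ω i)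
    (hWindep : IndepFun W (fun ω => (Matrix.of.symm (A ω), B ω)) μ)
    (hWfix : μ.map W = μ.map (fun ω => A ω *ᵥ W ω + B ω)) :
    ∀ i : Fin d, ∀ a : ℝ, 0 < a → a < tildeAlpha μ A α i →
      ∫⁻ ω, ENNReal.ofReal (W ω i ^ a) ∂μ < ⊤ := by
  have hcoord (i : Fin d) :
      ∀ a : ℝ, 0 < a → a < tildeAlpha μ A α i → ∫⁻ ω, ‖W ω i‖ₑ ^ a ∂μ < ∞ :=
    WellFoundedGT.induction i fun i ih _ ha haα =>
      hT.lintegral_enorm_coord_rpow_lt_top hWmeas hWindep hWfix i ih ha haα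
  intro i a ha haα
  refine (lintegral_mono fun ω => ?_).trans_lt (hcoord i a ha haα)
  rw [Real.enorm_eq_ofReal_abs, ENNReal.ofReal_rpow_of_nonneg (abs_nonneg _) ha.le]
  exact ENNReal.ofReal_le_ofReal ((le_abs_self _).trans (Real.abs_rpow_le_abs_rpow _ _))

/-- Lemma 4.2 of the paper: under condition (T), every coordinate `W i` of the
stationary solution has finite moments of every order `a` with `0 < a < α̃ i`. -/
theorem moments_below_tilde_index
    (μ : Measure Ω) [IsProbabilityMeasure μ]
    {d : ℕ} (hd : 1 ≤ d)
    (A : Ω → Matrix (Fin d) (Fin d) ℝ) (B : Ω → Fin d → ℝ) (α : Fin d → ℝ)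
    (hT : CondT μ A B α)
    (W : Ω → Fin d → ℝ) (hWmeas : ∀ i, Measurable fun ω => W ω i)
    (hWindep : IndepFun W (fun ω => (Matrix.of.symm (A ω), B ω)) μ)
    (hWfix : μ.map W = μ.map (fun ω => A ω *ᵥ W ω + B ω)) :
    ∀ i : Fin d, ∀ a : ℝ, 0 < a → a < tildeAlpha μ A α i →
      ∫⁻ ω, ENNReal.ofReal (W ω i ^ a) ∂μ < ⊤ :=
  moments_below_tilde_index_general μ A B α hT W hWmeas hWindep hWfix

end TriSRE
end

section
/- Suppose i ∈ {1, …, d} satisfies α_i > α̃_i = α_{j_0} for some j_0 with i ◁ j_0, and let u_i = lim_{s→∞} E[π_{i j_0}(s)^{α_{j_0}}] (which exists, is finite and strictly positive). Then for every j with j_0 ▷ j ⊵ i (i.e. i ⊴ j ◁ j_0) one has lim_{s→∞} E[π_{ij}(s)^{α_{j_0}}] = 0; in particular there exists ŝ_j such that E[π_{ij}(s)^{α_{j_0}}] < u_i for all s > ŝ_j. -/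
open MeasureTheory ProbabilityTheory Filter Matrix Set
open scoped ENNReal Topology

namespace TriSRE

variable {Ω : Type*} [MeasurableSpace Ω]

variable {d : ℕ}

/-- `PiProd A t n = A_t · A_{t-1} ⋯ A_{t-n+1}` (the product `Π_{t, t-n+1}` of `n` factors);
in particular `PiProd A 0 n = Π_n`. -/
noncomputable def PiProd (A : ℤ → Ω → Matrix (Fin d) (Fin d) ℝ) (t : ℤ) :
    ℕ → Ω → Matrix (Fin d) (Fin d) ℝ
  | 0 => fun _ => 1
  | n + 1 => fun ω => PiProd A t n ω * A (t - n) ω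

/-- `diagProd A i t n = A_{ii,t} · A_{ii,t-1} ⋯ A_{ii,t-n+1}` (the diagonal product
`Π^{(i)}_{t,t-n+1}`); in particular `diagProd A i 0 n = Π^{(i)}_n`. -/
noncomputable def diagProd (A : ℤ → Ω → Matrix (Fin d) (Fin d) ℝ) (i : Fin d) (t : ℤ) :
    ℕ → Ω → ℝ
  | 0 => fun _ => 1
  | n + 1 => fun ω => diagProd A i t n ω * A (t - n) ω i i

/-- The stationary solution process `W_t = Σ_{n=0}^∞ Π_{t,t+1-n} B_{t-n}`. -/
noncomputable def Wproc (A : ℤ → Ω → Matrix (Fin d) (Fin d) ℝ) (B : ℤ → Ω → Fin d → ℝ)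
    (t : ℤ) (ω : Ω) : Fin d → ℝ :=
  ∑' n : ℕ, PiProd A t n ω *ᵥ B (t - n) ω

/-- `(A_t, B_t)_{t ∈ ℤ}` is an i.i.d. sequence (with generic element `(A 0, B 0)`). -/
def IIDCopies (μ : Measure Ω) (A : ℤ → Ω → Matrix (Fin d) (Fin d) ℝ)
    (B : ℤ → Ω → Fin d → ℝ) : Prop :=
  (∀ t i j, Measurable fun ω => A t ω i j) ∧ (∀ t i, Measurable fun ω => B t ω i) ∧
  iIndepFun
    (fun t ω => (Matrix.of.symm (A t ω), B t ω)) μ ∧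
  ∀ t : ℤ, μ.map (fun ω => (Matrix.of.symm (A t ω), B t ω))
    = μ.map (fun ω => (Matrix.of.symm (A 0 ω), B 0 ω))

open scoped Classical in
/-- `D_{i,t} = Σ_{j : j ≻ i} A_{ij,t} W_{j,t-1} + B_{i,t}`. -/
noncomputable def Dterm (μ : Measure Ω) (A : ℤ → Ω → Matrix (Fin d) (Fin d) ℝ)
    (B : ℤ → Ω → Fin d → ℝ) (i : Fin d) (t : ℤ) (ω : Ω) : ℝ :=
  (∑ j ∈ Finset.univ.filter fun j => DirectDep μ (A 0) i j ∧ i ≠ j,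
      A t ω i j * Wproc A B (t - 1) ω j) + B t ω i

/-- `A⁰_t` : the matrix `A_t` with the diagonal replaced by zeros. -/
noncomputable def Azero (A : ℤ → Ω → Matrix (Fin d) (Fin d) ℝ) (t : ℤ) (ω : Ω) :
    Matrix (Fin d) (Fin d) ℝ :=
  Matrix.of fun i j => if i = j then 0 else A t ω i j

/-- The matrix of the `π'_{ij}(t, t-m+1)` (`m ≥ 1` factors): `A⁰_t · Π_{t-1, t-m+1}`. -/
noncomputable def piPrime (A : ℤ → Ω → Matrix (Fin d) (Fin d) ℝ) (t : ℤ) (m : ℕ)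
    (ω : Ω) : Matrix (Fin d) (Fin d) ℝ :=
  Azero A t ω * PiProd A (t - 1) (m - 1) ω

/-!
Write `β = α j₀` and `η = min 1 β⁻¹`, so that `X ↦ E[X ^ β] ^ η` is subadditive on nonnegative
random variables. Since `π_{ij}(s+1) = Σ_k π_{ik}(s) A_{kj,-s}` with independent factors, the
quantities `F_j(s) = E[π_{ij}(s) ^ β] ^ η` satisfy `F_j(s+1) ≤ Σ_k E[A_{kj} ^ β] ^ η F_k(s)`.
For an intermediate `j` we have `β < α j`, so `E[A_{jj} ^ β] < 1` by strict concavity of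
`y ↦ y ^ (β / α j)` and `E[A_{jj} ^ α j] = 1`; every other nonzero term involves an intermediate
`k < j`. Induction along the triangular order and a contraction argument give `F_j(s) → 0`.
-/

lemma rpow_le_mul_add_one_sub {y θ : ℝ} (hy : 0 ≤ y) (hθ0 : 0 ≤ θ) (hθ1 : θ ≤ 1) :
    y ^ θ ≤ θ * y + (1 - θ) := by
  have := rpow_one_add_le_one_add_mul_self (s := y - 1) (by linarith) hθ0 hθ1
  rw [add_sub_cancel] at this
  linarith

lemma rpow_lt_mul_add_one_sub {y θ : ℝ} (hy : 0 ≤ y) (hy1 : y ≠ 1) (hθ0 : 0 < θ)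
    (hθ1 : θ < 1) : y ^ θ < θ * y + (1 - θ) := by
  have := rpow_one_add_lt_one_add_mul_self (s := y - 1) (by linarith) (sub_ne_zero.2 hy1)
    hθ0 hθ1
  rw [add_sub_cancel] at this
  linarith

section Moments

variable {μ : Measure Ω} {Y : Ω → ℝ} {θ : ℝ}

lemma lintegral_ofReal_rpow_lt_top [IsFiniteMeasure μ] (hY : Integrable Y μ)
    (hY0 : 0 ≤ᵐ[μ] Y) (hθ0 : 0 ≤ θ) (hθ1 : θ ≤ 1) :
    ∫⁻ ω, ENNReal.ofReal (Y ω ^ θ) ∂μ < ∞ := by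
  refine lt_of_le_of_lt (lintegral_mono_ae ?_)
    ((hY.const_mul θ).add (integrable_const (1 - θ))).lintegral_lt_top
  filter_upwards [hY0] with ω hω
  exact ENNReal.ofReal_le_ofReal (rpow_le_mul_add_one_sub hω hθ0 hθ1)

lemma lintegral_ofReal_rpow_lt_one [IsProbabilityMeasure μ] (hY : Integrable Y μ)
    (hY0 : 0 ≤ᵐ[μ] Y) (hY1 : ∫ ω, Y ω ∂μ = 1) (hne : μ {ω | Y ω ≠ 1} ≠ 0)
    (hθ0 : 0 < θ) (hθ1 : θ < 1) :
    ∫⁻ ω, ENNReal.ofReal (Y ω ^ θ) ∂μ < 1 := by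
  have hint : Integrable (fun ω => θ * Y ω + (1 - θ)) μ :=
    (hY.const_mul θ).add (integrable_const _)
  have hle : ∀ᵐ ω ∂μ, ENNReal.ofReal (Y ω ^ θ) ≤ ENNReal.ofReal (θ * Y ω + (1 - θ)) := by
    filter_upwards [hY0] with ω hω
    exact ENNReal.ofReal_le_ofReal (rpow_le_mul_add_one_sub hω hθ0.le hθ1.le)
  have hbound : ∫⁻ ω, ENNReal.ofReal (θ * Y ω + (1 - θ)) ∂μ = 1 := by
    rw [← ofReal_integral_eq_lintegral_ofReal hint, integral_add (hY.const_mul θ)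
      (integrable_const _), integral_const_mul, hY1, integral_const]
    · simp
    · filter_upwards [hY0] with ω hω
      exact add_nonneg (mul_nonneg hθ0.le hω) (by linarith)
  rw [← hbound]
  refine lintegral_strict_mono_of_ae_le_of_ae_lt_on hint.aemeasurable.ennreal_ofReal
    (ne_top_of_le_ne_top (hbound ▸ ENNReal.one_ne_top) (lintegral_mono_ae hle)) hle hne ?_
  filter_upwards [hY0] with ω hω hω1
  exact (ENNReal.ofReal_lt_ofReal_iff (by linarith [mul_nonneg hθ0.le hω])).2
    (rpow_lt_mul_add_one_sub hω hω1 hθ0 hθ1)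

lemma lintegral_ofReal_rpow_eq_zero {X : Ω → ℝ} {β : ℝ} (hβ : 0 < β)
    (hX : ∀ᵐ ω ∂μ, X ω = 0) : ∫⁻ ω, ENNReal.ofReal (X ω ^ β) ∂μ = 0 := by
  rw [lintegral_congr_ae (g := 0)]
  · exact lintegral_zero
  · filter_upwards [hX] with ω hω
    simp [hω, Real.zero_rpow hβ.ne']

lemma lintegral_add_rpow_rpow_le {f g : Ω → ℝ≥0∞} {β : ℝ}
    (hf : AEMeasurable f μ) (hg : AEMeasurable g μ) (hβ : 0 < β) :
    (∫⁻ ω, (f ω + g ω) ^ β ∂μ) ^ min 1 β⁻¹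
      ≤ (∫⁻ ω, f ω ^ β ∂μ) ^ min 1 β⁻¹ + (∫⁻ ω, g ω ^ β ∂μ) ^ min 1 β⁻¹ := by
  rcases le_total β 1 with hβ1 | hβ1
  · rw [min_eq_left (one_le_inv₀ hβ |>.2 hβ1)]
    simp only [ENNReal.rpow_one]
    calc ∫⁻ ω, (f ω + g ω) ^ β ∂μ ≤ ∫⁻ ω, (f ω ^ β + g ω ^ β) ∂μ :=
          lintegral_mono fun ω => ENNReal.rpow_add_le_add_rpow _ _ hβ.le hβ1
      _ = _ := lintegral_add_left' (hf.pow_const β) _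
  · rw [min_eq_right (inv_le_one_of_one_le₀ hβ1), ← one_div]
    exact ENNReal.lintegral_Lp_add_le hf hg hβ1

lemma lintegral_finset_sum_rpow_rpow_le {ι : Type*} (K : Finset ι)
    {F : ι → Ω → ℝ≥0∞} {β : ℝ} (hF : ∀ k, AEMeasurable (F k) μ) (hβ : 0 < β) :
    (∫⁻ ω, (∑ k ∈ K, F k ω) ^ β ∂μ) ^ min 1 β⁻¹
      ≤ ∑ k ∈ K, (∫⁻ ω, F k ω ^ β ∂μ) ^ min 1 β⁻¹ := by
  classical
  induction K using Finset.induction with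
  | empty =>
    simp [ENNReal.zero_rpow_of_pos hβ, ENNReal.zero_rpow_of_pos (lt_min one_pos (inv_pos.2 hβ))]
  | insert a K ha ih =>
    simp only [Finset.sum_insert ha]
    exact (lintegral_add_rpow_rpow_le (hF a) (Finset.aemeasurable_fun_sum K fun k _ => hF k)
      hβ).trans (add_le_add_right ih _)

end Moments

lemma ne_top_of_le_mul_add {h ε : ℕ → ℝ≥0∞} {ρ : ℝ≥0∞} (hρ : ρ ≠ ∞) (h0 : h 0 ≠ ∞)
    (hε : ∀ s, ε s ≠ ∞) (hrec : ∀ s, h (s + 1) ≤ ρ * h s + ε s) (s : ℕ) : h s ≠ ∞ := by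
  induction s with
  | zero => exact h0
  | succ s ih =>
    exact ne_top_of_le_ne_top (ENNReal.add_ne_top.2 ⟨ENNReal.mul_ne_top hρ ih, hε s⟩) (hrec s)

lemma tendsto_zero_of_le_mul_add {h ε : ℕ → ℝ≥0∞} {ρ : ℝ≥0∞} (hρ : ρ < 1) (h0 : h 0 ≠ ∞)
    (hε_fin : ∀ s, ε s ≠ ∞) (hrec : ∀ s, h (s + 1) ≤ ρ * h s + ε s)
    (hε : Tendsto ε atTop (𝓝 0)) : Tendsto h atTop (𝓝 0) := by
  have hfin := ne_top_of_le_mul_add hρ.ne_top h0 hε_fin hrec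
  rw [ENNReal.tendsto_nhds_zero] at hε ⊢
  intro δ hδ
  have hδ2 : 0 < δ / 2 := ENNReal.half_pos hδ.ne'
  obtain ⟨s₀, hs₀⟩ := eventually_atTop.1
    (hε _ (ENNReal.mul_pos (tsub_pos_of_lt hρ).ne' hδ2.ne'))
  -- once `ε ≤ (1 - ρ) δ / 2`, the level `δ / 2` is invariant up to the decaying term
  have hdecay : ∀ n, h (s₀ + n) ≤ ρ ^ n * h s₀ + δ / 2 := by
    intro n
    induction n with
    | zero => simp
    | succ n ih =>
      calc h (s₀ + n + 1) ≤ ρ * h (s₀ + n) + ε (s₀ + n) := hrec _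
        _ ≤ ρ * (ρ ^ n * h s₀ + δ / 2) + (1 - ρ) * (δ / 2) := by
          gcongr
          exact hs₀ _ le_self_add
        _ = ρ ^ (n + 1) * h s₀ + δ / 2 := by
          rw [mul_add, ← mul_assoc, ← pow_succ', add_assoc, ← add_mul,
            add_tsub_cancel_of_le hρ.le, one_mul]
  have hpow : Tendsto (fun n => ρ ^ n * h s₀) atTop (𝓝 0) := by
    simpa using ENNReal.Tendsto.mul_const (ENNReal.tendsto_pow_atTop_nhds_zero_of_lt_one hρ)
      (Or.inr (hfin s₀))
  obtain ⟨N, hN⟩ := eventually_atTop.1 (ENNReal.tendsto_nhds_zero.1 hpow _ hδ2)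
  refine eventually_atTop.2 ⟨s₀ + N, fun s hs => ?_⟩
  obtain ⟨n, rfl⟩ := Nat.exists_eq_add_of_le (le_trans le_self_add hs)
  calc h (s₀ + n) ≤ ρ ^ n * h s₀ + δ / 2 := hdecay n
    _ ≤ δ / 2 + δ / 2 := by gcongr; exact hN n (by omega)
    _ = δ := ENNReal.add_halves δ

lemma tendsto_zero_of_tendsto_rpow {u : ℕ → ℝ≥0∞} {p : ℝ} (hp : 0 < p)
    (h : Tendsto (fun s => u s ^ p) atTop (𝓝 0)) : Tendsto u atTop (𝓝 0) := by
  have := ((ENNReal.continuous_rpow_const (y := p⁻¹)).tendsto 0).comp h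
  simpa only [Function.comp_def, ENNReal.rpow_rpow_inv hp.ne',
    ENNReal.zero_rpow_of_pos (inv_pos.2 hp)] using this

lemma tildeAlpha_le {μ : Measure Ω} {A : Ω → Matrix (Fin d) (Fin d) ℝ} {α : Fin d → ℝ}
    {i k : Fin d} (hk : Dep μ A i k) : tildeAlpha μ A α i ≤ α k :=
  csInf_le ((Set.finite_range α).subset (by rintro _ ⟨l, -, rfl⟩; exact ⟨l, rfl⟩)).bddBelow
    (show ∃ l, Dep μ A i l ∧ α k = α l from ⟨k, hk, rfl⟩)

namespace CondT

variable {μ : Measure Ω} {A : Ω → Matrix (Fin d) (Fin d) ℝ} {B : Ω → Fin d → ℝ}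
  {α : Fin d → ℝ} {β : ℝ}

lemma directDep_le (hT : CondT μ A B α) {k l : Fin d} (h : DirectDep μ A k l) : k ≤ l := by
  by_contra! hlk
  refine h.ne' (measure_mono_null (fun ω hω => ?_) (ae_iff.1 (hT.upperTriangular k l hlk)))
  exact hω.ne'

lemma dep_le (hT : CondT μ A B α) {k l : Fin d} (h : Dep μ A k l) : k ≤ l := by
  induction h with
  | refl => exact le_rfl
  | tail _ hd ih => exact ih.trans (hT.directDep_le hd)

lemma lintegral_rpow_eq_lintegral_rpow_alpha (hT : CondT μ A B α) (k l : Fin d) :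
    ∫⁻ ω, ENNReal.ofReal (A ω k l ^ β) ∂μ
      = ∫⁻ ω, ENNReal.ofReal ((A ω k l ^ α k) ^ (β / α k)) ∂μ := by
  refine lintegral_congr_ae ?_
  filter_upwards [hT.nonnegA k l] with ω hω
  rw [← Real.rpow_mul hω, mul_div_cancel₀ β (hT.alpha_pos k).ne']

lemma lintegral_rpow_lt_top [IsFiniteMeasure μ] (hT : CondT μ A B α) (hβ0 : 0 < β)
    {k : Fin d} (hβk : β ≤ α k) (l : Fin d) :
    ∫⁻ ω, ENNReal.ofReal (A ω k l ^ β) ∂μ < ∞ := by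
  have hαk := hT.alpha_pos k
  rw [hT.lintegral_rpow_eq_lintegral_rpow_alpha]
  exact lintegral_ofReal_rpow_lt_top (hT.A_moment k l)
    ((hT.nonnegA k l).mono fun ω hω => Real.rpow_nonneg hω _) (div_pos hβ0 hαk).le
    ((div_le_one hαk).2 hβk)

lemma lintegral_diag_rpow_lt_one [IsProbabilityMeasure μ] (hT : CondT μ A B α)
    (hβ0 : 0 < β) {k : Fin d} (hβk : β < α k) :
    ∫⁻ ω, ENNReal.ofReal (A ω k k ^ β) ∂μ < 1 := by
  have hαk := hT.alpha_pos k
  -- (T-8) for the lattice `0 ℤ`: `A k k ≠ 1` with positive probability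
  have hne : μ {ω | A ω k k ^ α k ≠ 1} ≠ 0 := by
    refine fun h0 => hT.nonarithmetic k 0 (measure_mono_null (fun ω ⟨hpos, hlog⟩ => ?_) h0)
    intro h1
    refine hlog 0 ?_
    have := congrArg Real.log h1
    rw [Real.log_rpow hpos, Real.log_one] at this
    simpa [hαk.ne'] using this
  rw [hT.lintegral_rpow_eq_lintegral_rpow_alpha]
  exact lintegral_ofReal_rpow_lt_one (hT.A_moment k k)
    ((hT.nonnegA k k).mono fun ω hω => Real.rpow_nonneg hω _) (hT.diag_moment_one k) hne
    (div_pos hβ0 hαk) ((div_lt_one hαk).2 hβk)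

end CondT

lemma measurable_piProd_apply {A : ℤ → Ω → Matrix (Fin d) (Fin d) ℝ} {t : ℤ} {n : ℕ}
    (hA : ∀ r < n, ∀ k l, Measurable fun ω => A (t - r) ω k l) (a b : Fin d) :
    Measurable fun ω => PiProd A t n ω a b := by
  induction n generalizing a b with
  | zero => exact measurable_const
  | succ n ih =>
    simp only [PiProd, Matrix.mul_apply]
    exact Finset.measurable_sum _ fun c _ =>
      (ih (fun r hr => hA r (by omega)) a c).mul (hA n n.lt_succ_self c b)

namespace IIDCopies

variable {μ : Measure Ω} {A : ℤ → Ω → Matrix (Fin d) (Fin d) ℝ} {B : ℤ → Ω → Fin d → ℝ}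
  {α : Fin d → ℝ}

lemma measurable_pair (hiid : IIDCopies μ A B) (t : ℤ) :
    Measurable fun ω => (Matrix.of.symm (A t ω), B t ω) :=
  (measurable_pi_lambda _ fun a => measurable_pi_lambda _ fun b => hiid.1 t a b).prodMk
    (measurable_pi_lambda _ fun a => hiid.2.1 t a)

lemma identDistrib_apply (hiid : IIDCopies μ A B) (t : ℤ) (k l : Fin d) :
    IdentDistrib (fun ω => A t ω k l) (fun ω => A 0 ω k l) μ μ :=
  (IdentDistrib.mk (hiid.measurable_pair t).aemeasurable (hiid.measurable_pair 0).aemeasurable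
    (hiid.2.2.2 t)).comp (u := fun p : (Fin d → Fin d → ℝ) × (Fin d → ℝ) => p.1 k l)
    measurable_fst.eval.eval

lemma ae_nonneg (hiid : IIDCopies μ A B) (hT : CondT μ (A 0) (B 0) α) (t : ℤ) (k l : Fin d) :
    ∀ᵐ ω ∂μ, 0 ≤ A t ω k l :=
  (hiid.identDistrib_apply t k l).symm.ae_snd measurableSet_Ici (hT.nonnegA k l)

lemma ae_eq_zero_of_not_directDep (hiid : IIDCopies μ A B) (hT : CondT μ (A 0) (B 0) α)
    {k l : Fin d} (h : ¬ DirectDep μ (A 0) k l) (t : ℤ) : ∀ᵐ ω ∂μ, A t ω k l = 0 := by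
  have hpos : ∀ᵐ ω ∂μ, ¬ 0 < A 0 ω k l := ae_iff.2 (by simpa [DirectDep] using h)
  refine (hiid.identDistrib_apply t k l).symm.ae_snd (measurableSet_singleton 0) ?_
  filter_upwards [hT.nonnegA k l, hpos] with ω h0 h1
  exact le_antisymm (not_lt.1 h1) h0

lemma lintegral_rpow_eq (hiid : IIDCopies μ A B) {β : ℝ} (hβ : 0 ≤ β) (t : ℤ) (k l : Fin d) :
    ∫⁻ ω, ENNReal.ofReal (A t ω k l ^ β) ∂μ = ∫⁻ ω, ENNReal.ofReal (A 0 ω k l ^ β) ∂μ :=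
  ((hiid.identDistrib_apply t k l).comp
    (Real.continuous_rpow_const hβ).measurable.ennreal_ofReal).lintegral_eq

lemma ae_nonneg_piProd (hiid : IIDCopies μ A B) (hT : CondT μ (A 0) (B 0) α) (t : ℤ) (n : ℕ) :
    ∀ᵐ ω ∂μ, ∀ a b, 0 ≤ PiProd A t n ω a b := by
  induction n with
  | zero =>
    refine Eventually.of_forall fun ω a b => ?_
    simp only [PiProd, Matrix.one_apply]
    positivity
  | succ n ih =>
    have hA : ∀ᵐ ω ∂μ, ∀ c b, 0 ≤ A (t - n) ω c b :=
      ae_all_iff.2 fun c => ae_all_iff.2 fun b => hiid.ae_nonneg hT _ c b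
    filter_upwards [ih, hA] with ω h1 h2 a b
    simp only [PiProd, Matrix.mul_apply]
    exact Finset.sum_nonneg fun c _ => mul_nonneg (h1 a c) (h2 c b)

lemma ae_piProd_eq_zero_of_not_dep (hiid : IIDCopies μ A B) (hT : CondT μ (A 0) (B 0) α)
    (i : Fin d) (t : ℤ) (n : ℕ) :
    ∀ᵐ ω ∂μ, ∀ b, ¬ Dep μ (A 0) i b → PiProd A t n ω i b = 0 := by
  induction n with
  | zero =>
    refine Eventually.of_forall fun ω b hb => ?_
    simp only [PiProd, Matrix.one_apply]
    exact if_neg (by rintro rfl; exact hb .refl)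
  | succ n ih =>
    have hA : ∀ᵐ ω ∂μ, ∀ c b, ¬ DirectDep μ (A 0) c b → A (t - n) ω c b = 0 := by
      refine ae_all_iff.2 fun c => ae_all_iff.2 fun b => ?_
      by_cases h : DirectDep μ (A 0) c b
      · exact Eventually.of_forall fun ω hh => absurd h hh
      · exact (hiid.ae_eq_zero_of_not_directDep hT h _).mono fun ω h0 _ => h0
    filter_upwards [ih, hA] with ω h1 h2 b hb
    simp only [PiProd, Matrix.mul_apply]
    refine Finset.sum_eq_zero fun c _ => ?_
    by_cases hc : Dep μ (A 0) i c
    · rw [h2 c b fun hd => hb (hc.tail hd), mul_zero]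
    · rw [h1 c hc, zero_mul]

/-- `Π_s` only involves the times `0, -1, …, -(s-1)`, hence is independent of `A_{-s}`. -/
lemma indepFun_piProd_apply (hiid : IIDCopies μ A B) (s : ℕ) (i k k' l : Fin d) :
    IndepFun (fun ω => PiProd A 0 s ω i k) (fun ω => A (0 - s) ω k' l) μ := by
  set m : ℤ → MeasurableSpace Ω := fun t =>
    MeasurableSpace.comap (fun ω => (Matrix.of.symm (A t ω), B t ω)) inferInstance
  have hentry : ∀ t k l, Measurable[m t] fun ω => A t ω k l := fun t k l =>
    (by fun_prop : Measurable fun p : (Fin d → Fin d → ℝ) × (Fin d → ℝ) => p.1 k l).comp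
      (comap_measurable _)
  have hind := indep_iSup_of_disjoint (fun t => (hiid.measurable_pair t).comap_le)
    ((iIndepFun_iff_iIndep _ _ _).1 hiid.2.2.1)
    (show Disjoint (Set.Ioi (0 - (s : ℤ))) {0 - (s : ℤ)} by simp)
  have hpast : Measurable[⨆ t ∈ Set.Ioi (0 - (s : ℤ)), m t] fun ω => PiProd A 0 s ω i k :=
    @measurable_piProd_apply Ω (⨆ t ∈ Set.Ioi (0 - (s : ℤ)), m t) d A 0 s
      (fun r hr k l => (hentry _ k l).mono
        (le_iSup₂ (f := fun t (_ : t ∈ Set.Ioi (0 - (s : ℤ))) => m t) (0 - r) (by simp; omega))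
        le_rfl) i k
  rw [IndepFun_iff_Indep]
  refine indep_of_indep_of_le_right (indep_of_indep_of_le_left hind hpast.comap_le) ?_
  exact Measurable.comap_le ((hentry _ k' l).mono
    (le_iSup₂ (f := fun t (_ : t ∈ ({0 - (s : ℤ)} : Set ℤ)) => m t) _ rfl) le_rfl)

end IIDCopies

/-- `E[π_{ij}(s) ^ β]`. -/
noncomputable def piMoment (μ : Measure Ω) (A : ℤ → Ω → Matrix (Fin d) (Fin d) ℝ) (β : ℝ)
    (i j : Fin d) (s : ℕ) : ℝ≥0∞ :=
  ∫⁻ ω, ENNReal.ofReal (PiProd A 0 s ω i j ^ β) ∂μ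

section piMoment

variable {μ : Measure Ω} {A : ℤ → Ω → Matrix (Fin d) (Fin d) ℝ} {B : ℤ → Ω → Fin d → ℝ}
  {α : Fin d → ℝ} {β : ℝ}

lemma piMoment_zero_le_one [IsProbabilityMeasure μ] (hβ : 0 < β) (i j : Fin d) :
    piMoment μ A β i j 0 ≤ 1 := by
  calc piMoment μ A β i j 0 ≤ ∫⁻ _, 1 ∂μ := lintegral_mono fun ω => ?_
    _ = 1 := by simp
  simp only [PiProd, Matrix.one_apply]
  split_ifs <;> simp [Real.zero_rpow hβ.ne']

lemma piMoment_eq_zero_of_not_dep (hiid : IIDCopies μ A B) (hT : CondT μ (A 0) (B 0) α)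
    (hβ : 0 < β) {i j : Fin d} (hij : ¬ Dep μ (A 0) i j) (s : ℕ) : piMoment μ A β i j s = 0 :=
  lintegral_ofReal_rpow_eq_zero hβ
    ((hiid.ae_piProd_eq_zero_of_not_dep hT i 0 s).mono fun _ h => h j hij)

lemma lintegral_piProd_mul_rpow (hiid : IIDCopies μ A B) (hT : CondT μ (A 0) (B 0) α)
    (hβ : 0 < β) (s : ℕ) (i k j : Fin d) :
    ∫⁻ ω, (ENNReal.ofReal (PiProd A 0 s ω i k) * ENNReal.ofReal (A (0 - s) ω k j)) ^ β ∂μ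
      = (∫⁻ ω, ENNReal.ofReal (A 0 ω k j ^ β) ∂μ) * piMoment μ A β i k s := by
  have hpow : Measurable fun x : ℝ => ENNReal.ofReal (x ^ β) :=
    (Real.continuous_rpow_const hβ.le).measurable.ennreal_ofReal
  have hsplit : ∀ᵐ ω ∂μ,
      (ENNReal.ofReal (PiProd A 0 s ω i k) * ENNReal.ofReal (A (0 - s) ω k j)) ^ β
        = ENNReal.ofReal (PiProd A 0 s ω i k ^ β) * ENNReal.ofReal (A (0 - s) ω k j ^ β) := by
    filter_upwards [hiid.ae_nonneg_piProd hT 0 s, hiid.ae_nonneg hT (0 - s) k j] with ω h1 h2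
    rw [ENNReal.mul_rpow_of_nonneg _ _ hβ.le, ENNReal.ofReal_rpow_of_nonneg (h1 i k) hβ.le,
      ENNReal.ofReal_rpow_of_nonneg h2 hβ.le]
  have hindep : IndepFun (fun ω => ENNReal.ofReal (PiProd A 0 s ω i k ^ β))
      (fun ω => ENNReal.ofReal (A (0 - s) ω k j ^ β)) μ :=
    (hiid.indepFun_piProd_apply s i k k j).comp hpow hpow
  have hpi : AEMeasurable (fun ω => ENNReal.ofReal (PiProd A 0 s ω i k ^ β)) μ :=
    (hpow.comp (measurable_piProd_apply (fun r _ => hiid.1 _) i k)).aemeasurable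
  have hA : AEMeasurable (fun ω => ENNReal.ofReal (A (0 - s) ω k j ^ β)) μ :=
    (hpow.comp (hiid.1 _ k j)).aemeasurable
  rw [lintegral_congr_ae hsplit,
    lintegral_mul_eq_lintegral_mul_lintegral_of_indepFun'' hpi hA hindep,
    hiid.lintegral_rpow_eq hβ.le, mul_comm, piMoment]

lemma piMoment_succ_rpow_le (hiid : IIDCopies μ A B) (hT : CondT μ (A 0) (B 0) α)
    (hβ : 0 < β) (s : ℕ) (i j : Fin d) :
    piMoment μ A β i j (s + 1) ^ min 1 β⁻¹
      ≤ ∑ k, (∫⁻ ω, ENNReal.ofReal (A 0 ω k j ^ β) ∂μ) ^ min 1 β⁻¹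
          * piMoment μ A β i k s ^ min 1 β⁻¹ := by
  have hsum : piMoment μ A β i j (s + 1) = ∫⁻ ω, (∑ k,
      ENNReal.ofReal (PiProd A 0 s ω i k) * ENNReal.ofReal (A (0 - s) ω k j)) ^ β ∂μ := by
    refine lintegral_congr_ae ?_
    have hA : ∀ᵐ ω ∂μ, ∀ k, 0 ≤ A (0 - s) ω k j :=
      ae_all_iff.2 fun k => hiid.ae_nonneg hT _ k j
    filter_upwards [hiid.ae_nonneg_piProd hT 0 s, hA] with ω h1 h2
    simp only [PiProd, Matrix.mul_apply]
    rw [← ENNReal.ofReal_rpow_of_nonneg (Finset.sum_nonneg fun k _ => mul_nonneg (h1 i k) (h2 k))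
      hβ.le, ENNReal.ofReal_sum_of_nonneg fun k _ => mul_nonneg (h1 i k) (h2 k)]
    simp only [ENNReal.ofReal_mul (h1 i _)]
  rw [hsum]
  refine (lintegral_finset_sum_rpow_rpow_le _ (fun k => ?_) hβ).trans_eq ?_
  · exact ((measurable_piProd_apply (fun r _ => hiid.1 _) i k).ennreal_ofReal.mul
      (hiid.1 _ k j).ennreal_ofReal).aemeasurable
  · refine Finset.sum_congr rfl fun k _ => ?_
    rw [lintegral_piProd_mul_rpow hiid hT hβ,
      ENNReal.mul_rpow_of_nonneg _ _ (le_min zero_le_one (inv_nonneg.2 hβ.le))]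

lemma tendsto_entry_mul_piMoment_rpow [IsFiniteMeasure μ] (hiid : IIDCopies μ A B)
    (hT : CondT μ (A 0) (B 0) α)
    (hβ : 0 < β) {i l j : Fin d} (hβl : Dep μ (A 0) i l → β ≤ α l)
    (hl : Dep μ (A 0) i l → DirectDep μ (A 0) l j →
      Tendsto (fun s => piMoment μ A β i l s ^ min 1 β⁻¹) atTop (𝓝 0) ∧
        ∀ s, piMoment μ A β i l s ^ min 1 β⁻¹ ≠ ∞) :
    Tendsto (fun s => (∫⁻ ω, ENNReal.ofReal (A 0 ω l j ^ β) ∂μ) ^ min 1 β⁻¹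
        * piMoment μ A β i l s ^ min 1 β⁻¹) atTop (𝓝 0) ∧
      ∀ s, (∫⁻ ω, ENNReal.ofReal (A 0 ω l j ^ β) ∂μ) ^ min 1 β⁻¹
        * piMoment μ A β i l s ^ min 1 β⁻¹ ≠ ∞ := by
  have hη : 0 < min 1 β⁻¹ := lt_min one_pos (inv_pos.2 hβ)
  by_cases hil : Dep μ (A 0) i l
  swap
  · simp only [piMoment_eq_zero_of_not_dep hiid hT hβ hil, ENNReal.zero_rpow_of_pos hη, mul_zero]
    exact ⟨tendsto_const_nhds, fun _ => ENNReal.zero_ne_top⟩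
  by_cases hlj : DirectDep μ (A 0) l j
  swap
  · simp only [lintegral_ofReal_rpow_eq_zero hβ (hiid.ae_eq_zero_of_not_directDep hT hlj 0),
      ENNReal.zero_rpow_of_pos hη, zero_mul]
    exact ⟨tendsto_const_nhds, fun _ => ENNReal.zero_ne_top⟩
  have hc : (∫⁻ ω, ENNReal.ofReal (A 0 ω l j ^ β) ∂μ) ^ min 1 β⁻¹ ≠ ∞ :=
    ENNReal.rpow_ne_top_of_nonneg hη.le (hT.lintegral_rpow_lt_top hβ (hβl hil) j).ne
  obtain ⟨hlim, hfin⟩ := hl hil hlj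
  exact ⟨by simpa using ENNReal.Tendsto.const_mul hlim (Or.inr hc),
    fun s => ENNReal.mul_ne_top hc (hfin s)⟩

lemma tendsto_piMoment_rpow_zero [IsProbabilityMeasure μ] (hiid : IIDCopies μ A B)
    (hT : CondT μ (A 0) (B 0) α) {i j₀ : Fin d} (hβ : ∀ k, Dep μ (A 0) i k → α j₀ ≤ α k)
    (j : Fin d) : Dep μ (A 0) j j₀ → j ≠ j₀ →
      Tendsto (fun s => piMoment μ A (α j₀) i j s ^ min 1 (α j₀)⁻¹) atTop (𝓝 0) ∧
        ∀ s, piMoment μ A (α j₀) i j s ^ min 1 (α j₀)⁻¹ ≠ ∞ := by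
  induction j using WellFoundedLT.induction with
  | _ j ih =>
  intro hj hjne
  have hβ0 : 0 < α j₀ := hT.alpha_pos j₀
  have hη : 0 < min 1 (α j₀)⁻¹ := lt_min one_pos (inv_pos.2 hβ0)
  by_cases hij : Dep μ (A 0) i j
  swap
  · simp only [piMoment_eq_zero_of_not_dep hiid hT hβ0 hij, ENNReal.zero_rpow_of_pos hη]
    exact ⟨tendsto_const_nhds, fun _ => ENNReal.zero_ne_top⟩
  set c : Fin d → ℝ≥0∞ := fun l => (∫⁻ ω, ENNReal.ofReal (A 0 ω l j ^ α j₀) ∂μ) ^ min 1 (α j₀)⁻¹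
  set F : Fin d → ℕ → ℝ≥0∞ := fun l s => piMoment μ A (α j₀) i l s ^ min 1 (α j₀)⁻¹
  have hterm : ∀ l ∈ Finset.univ.erase j,
      Tendsto (fun s => c l * F l s) atTop (𝓝 0) ∧ ∀ s, c l * F l s ≠ ∞ := by
    refine fun l hl => tendsto_entry_mul_piMoment_rpow hiid hT hβ0 (hβ l) fun _ hlj => ?_
    have hlt : l < j := (hT.directDep_le hlj).lt_of_ne (Finset.ne_of_mem_erase hl)
    exact ih l hlt (.head hlj hj) (hlt.trans_le (hT.dep_le hj)).ne
  have hρ : c j < 1 := ENNReal.rpow_lt_one (hT.lintegral_diag_rpow_lt_one hβ0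
    ((hβ j hij).lt_of_ne (hT.alpha_injective j₀ j hjne.symm))) hη
  have hrec : ∀ s, F j (s + 1) ≤ c j * F j s + ∑ l ∈ Finset.univ.erase j, c l * F l s :=
    fun s => (piMoment_succ_rpow_le hiid hT hβ0 s i j).trans_eq
      (Finset.add_sum_erase _ _ (Finset.mem_univ j)).symm
  have hF0 : F j 0 ≠ ∞ := ENNReal.rpow_ne_top_of_nonneg hη.le
    (ne_top_of_le_ne_top ENNReal.one_ne_top (piMoment_zero_le_one hβ0 i j))
  have hε : ∀ s, ∑ l ∈ Finset.univ.erase j, c l * F l s ≠ ∞ :=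
    fun s => ENNReal.sum_ne_top.2 fun l hl => (hterm l hl).2 s
  exact ⟨tendsto_zero_of_le_mul_add hρ hF0 hε hrec
      (by simpa using tendsto_finsetSum _ fun l hl => (hterm l hl).1),
    ne_top_of_le_mul_add hρ.ne_top hF0 hε hrec⟩

end piMoment

theorem intermediate_pi_moment_vanishes_general
    (μ : Measure Ω) [IsProbabilityMeasure μ]
    (A : ℤ → Ω → Matrix (Fin d) (Fin d) ℝ) (B : ℤ → Ω → Fin d → ℝ) (α : Fin d → ℝ)
    (hiid : IIDCopies μ A B) (hT : CondT μ (A 0) (B 0) α)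
    (i j₀ : Fin d)
    (heq : tildeAlpha μ (A 0) α i = α j₀)
    (u : ℝ≥0∞) (hu_pos : 0 < u) :
    ∀ j : Fin d, Dep μ (A 0) i j → Dep μ (A 0) j j₀ → j ≠ j₀ →
      Tendsto (fun s : ℕ => ∫⁻ ω, ENNReal.ofReal (PiProd A 0 s ω i j ^ α j₀) ∂μ)
        atTop (𝓝 0) ∧
      ∃ s₁ : ℕ, ∀ s > s₁,
        ∫⁻ ω, ENNReal.ofReal (PiProd A 0 s ω i j ^ α j₀) ∂μ < u := by
  intro j _ hjj₀ hjne
  have hβ : ∀ k, Dep μ (A 0) i k → α j₀ ≤ α k := fun k hk => heq ▸ tildeAlpha_le hk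
  have hlim : Tendsto (piMoment μ A (α j₀) i j) atTop (𝓝 0) :=
    tendsto_zero_of_tendsto_rpow (lt_min one_pos (inv_pos.2 (hT.alpha_pos j₀)))
      (tendsto_piMoment_rpow_zero hiid hT hβ j hjj₀ hjne).1
  obtain ⟨N, hN⟩ := eventually_atTop.1 (hlim.eventually_lt_const hu_pos)
  exact ⟨hlim, N, fun s hs => hN s hs.le⟩

/-- Lemma 5.6 of the paper: for every intermediate coordinate `j` with
`i ⊴ j ◁ j₀`, the moments `E[π_{ij}(s)^{α j₀}]` tend to `0`; in particular they are
eventually smaller than `u_i`. -/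
theorem intermediate_pi_moment_vanishes
    (μ : Measure Ω) [IsProbabilityMeasure μ] (hd : 1 ≤ d)
    (A : ℤ → Ω → Matrix (Fin d) (Fin d) ℝ) (B : ℤ → Ω → Fin d → ℝ) (α : Fin d → ℝ)
    (hiid : IIDCopies μ A B) (hT : CondT μ (A 0) (B 0) α)
    (i j₀ : Fin d) (hdep : Dep μ (A 0) i j₀) (hne : i ≠ j₀)
    (hlt : tildeAlpha μ (A 0) α i < α i)
    (heq : tildeAlpha μ (A 0) α i = α j₀)
    (u : ℝ≥0∞) (hu_pos : 0 < u) (hu_fin : u < ⊤)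
    (hu : Tendsto (fun s : ℕ => ∫⁻ ω, ENNReal.ofReal (PiProd A 0 s ω i j₀ ^ α j₀) ∂μ)
      atTop (𝓝 u)) :
    ∀ j : Fin d, Dep μ (A 0) i j → Dep μ (A 0) j j₀ → j ≠ j₀ →
      Tendsto (fun s : ℕ => ∫⁻ ω, ENNReal.ofReal (PiProd A 0 s ω i j ^ α j₀) ∂μ)
        atTop (𝓝 0) ∧
      ∃ s₁ : ℕ, ∀ s > s₁,
        ∫⁻ ω, ENNReal.ofReal (PiProd A 0 s ω i j ^ α j₀) ∂μ < u :=
  intermediate_pi_moment_vanishes_general μ A B α hiid hT i j₀ heq u hu_pos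

end TriSRE
end

section
/- Let A_0, A_{−1}, …, A_{−n+1} be i.i.d. random d×d matrices with nonnegative entries a.s., let 0 < ε ≤ 1, assume E[A_{ij}^ε] < ∞ for all i, j, and set Π_n = A_0 A_{−1} ⋯ A_{−n+1}. Then E[‖Π_n‖₁^ε] ≤ ‖(E[A^(ε)])^n‖₁, where ‖M‖₁ = Σ_{i,j} |M_{ij}|, A^(ε) is the matrix A with each entry raised to the power ε, E[A^(ε)] is its entrywise expectation, and the n-th power on the right-hand side is taken in the sense of matrix multiplication. -/
open MeasureTheory ProbabilityTheory Filter Matrix Set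
open scoped ENNReal Topology

namespace TriSRE

variable {Ω : Type*} [MeasurableSpace Ω]

variable {d : ℕ}

/-- The expectation of a real random variable with values in `EReal`
(`E f = ∫⁻ f⁺ − ∫⁻ f⁻`); it equals `−∞` when the negative part is not integrable
(and the positive part is). -/
noncomputable def emean (μ : Measure Ω) (f : Ω → ℝ) : EReal :=
  ((∫⁻ ω, ENNReal.ofReal (f ω) ∂μ : ℝ≥0∞) : EReal)
    - ((∫⁻ ω, ENNReal.ofReal (-f ω) ∂μ : ℝ≥0∞) : EReal)

/-- The entrywise matrix norm `‖M‖₁ = Σ_{i,j} |M i j|`. -/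
noncomputable def entryNorm (M : Matrix (Fin d) (Fin d) ℝ) : ℝ :=
  ∑ i, ∑ j, |M i j|

/-- The top Lyapunov exponent `γ_A = inf_{n ≥ 1} (1/n) E[log ‖Π_n‖₁]`, as an extended
real number. -/
noncomputable def lyapunov (μ : Measure Ω) (A : ℤ → Ω → Matrix (Fin d) (Fin d) ℝ) :
    EReal :=
  ⨅ n : ℕ, ((((n : ℝ) + 1)⁻¹ : ℝ) : EReal)
    * emean μ fun ω => Real.log (entryNorm (PiProd A 0 (n + 1) ω))

/-- `(A_t)_{t ∈ ℤ}` is an i.i.d. sequence of random matrices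
(with generic element `A 0`). -/
def IIDMat (μ : Measure Ω) (A : ℤ → Ω → Matrix (Fin d) (Fin d) ℝ) : Prop :=
  (∀ t i j, Measurable fun ω => A t ω i j) ∧
  iIndepFun (fun t ω => Matrix.of.symm (A t ω)) μ ∧
  ∀ t : ℤ, μ.map (fun ω => Matrix.of.symm (A t ω))
    = μ.map (fun ω => Matrix.of.symm (A 0 ω))

/-- The spectral radius of a real matrix: the largest modulus of its complex
eigenvalues. -/
noncomputable def specRad (M : Matrix (Fin d) (Fin d) ℝ) : ℝ≥0∞ :=
  spectralRadius ℂ (M.map (Complex.ofReal))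

/-!
For `0 < ε ≤ 1` the map `x ↦ x ^ ε` is subadditive, so pointwise
`(Π_{m+1})^(ε) ≤ Π_m^(ε) A_{-m}^(ε)` entrywise. The product `Π_m` is a function of
`A_0, …, A_{-m+1}` only, hence independent of `A_{-m}`, and taking expectations gives
`E[Π_{m+1}^(ε)] ≤ E[Π_m^(ε)] E[A^(ε)]`; by induction `E[Π_n^(ε)] ≤ E[A^(ε)]^n` entrywise.
Summing the entries and using `‖M‖₁^ε ≤ ‖M^(ε)‖₁` gives the claim.
-/

open scoped NNReal

theorem _root_.ENNReal.rpow_sum_le_sum_rpow {ι : Type*} (s : Finset ι) (f : ι → ℝ≥0∞) {p : ℝ}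
    (hp₀ : 0 < p) (hp₁ : p ≤ 1) : (∑ i ∈ s, f i) ^ p ≤ ∑ i ∈ s, f i ^ p := by
  classical
  induction s using Finset.induction_on with
  | empty => simp [ENNReal.zero_rpow_of_pos hp₀]
  | insert a s ha ih =>
    rw [Finset.sum_insert ha, Finset.sum_insert ha]
    exact (ENNReal.rpow_add_le_add_rpow _ _ hp₀.le hp₁).trans (add_le_add le_rfl ih)

section RpowMoment

variable {l m n : Type*} [Fintype m] {ε : ℝ}

theorem ofReal_mul_apply_rpow_le {X : Matrix l m ℝ} {Y : Matrix m n ℝ}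
    (hX : ∀ i k, 0 ≤ X i k) (hY : ∀ k j, 0 ≤ Y k j) (hε₀ : 0 < ε) (hε₁ : ε ≤ 1)
    (i : l) (j : n) :
    ENNReal.ofReal ((X * Y) i j) ^ ε
      ≤ ∑ k, ENNReal.ofReal (X i k) ^ ε * ENNReal.ofReal (Y k j) ^ ε := by
  rw [Matrix.mul_apply, ENNReal.ofReal_sum_of_nonneg fun k _ => mul_nonneg (hX i k) (hY k j)]
  refine (ENNReal.rpow_sum_le_sum_rpow _ _ hε₀ hε₁).trans_eq (Finset.sum_congr rfl fun k _ => ?_)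
  rw [ENNReal.ofReal_mul (hX i k), ENNReal.mul_rpow_of_nonneg _ _ hε₀.le]

/-- The matrix `E[X^(ε)]`, with entries in `ℝ≥0∞` so that no integrability is needed. -/
noncomputable def rpowMoment (μ : Measure Ω) (ε : ℝ) (X : Ω → Matrix m n ℝ) :
    Matrix m n ℝ≥0∞ :=
  Matrix.of fun i j => ∫⁻ ω, ENNReal.ofReal (X ω i j) ^ ε ∂μ

theorem rpowMoment_mul_le {μ : Measure Ω} {X : Ω → Matrix l m ℝ} {Y : Ω → Matrix m n ℝ}
    (hX₀ : ∀ᵐ ω ∂μ, ∀ i k, 0 ≤ X ω i k) (hY₀ : ∀ᵐ ω ∂μ, ∀ k j, 0 ≤ Y ω k j)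
    (hX : ∀ i k, AEMeasurable (fun ω => X ω i k) μ)
    (hY : ∀ k j, AEMeasurable (fun ω => Y ω k j) μ)
    (hXY : ∀ i k j, IndepFun (fun ω => X ω i k) (fun ω => Y ω k j) μ)
    (hε₀ : 0 < ε) (hε₁ : ε ≤ 1) (i : l) (j : n) :
    rpowMoment μ ε (fun ω => X ω * Y ω) i j ≤ (rpowMoment μ ε X * rpowMoment μ ε Y) i j := by
  have hφ : Measurable fun x : ℝ => ENNReal.ofReal x ^ ε :=
    ENNReal.measurable_ofReal.pow_const ε
  calc rpowMoment μ ε (fun ω => X ω * Y ω) i j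
      ≤ ∫⁻ ω, ∑ k, ENNReal.ofReal (X ω i k) ^ ε * ENNReal.ofReal (Y ω k j) ^ ε ∂μ := by
        refine lintegral_mono_ae ?_
        filter_upwards [hX₀, hY₀] with ω hXω hYω
        exact ofReal_mul_apply_rpow_le hXω hYω hε₀ hε₁ i j
    _ = ∑ k, ∫⁻ ω, ENNReal.ofReal (X ω i k) ^ ε * ENNReal.ofReal (Y ω k j) ^ ε ∂μ :=
        lintegral_finsetSum' _ fun k _ =>
          (hφ.comp_aemeasurable (hX i k)).mul (hφ.comp_aemeasurable (hY k j))
    _ = ∑ k, (∫⁻ ω, ENNReal.ofReal (X ω i k) ^ ε ∂μ) * ∫⁻ ω, ENNReal.ofReal (Y ω k j) ^ ε ∂μ :=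
        Finset.sum_congr rfl fun k _ =>
          lintegral_mul_eq_lintegral_mul_lintegral_of_indepFun'' (hφ.comp_aemeasurable (hX i k))
            (hφ.comp_aemeasurable (hY k j)) ((hXY i k j).comp hφ hφ)
    _ = (rpowMoment μ ε X * rpowMoment μ ε Y) i j := rfl

end RpowMoment

theorem ofReal_entryNorm_rpow_le {N : Matrix (Fin d) (Fin d) ℝ} (hN : ∀ i j, 0 ≤ N i j)
    {ε : ℝ} (hε₀ : 0 < ε) (hε₁ : ε ≤ 1) :
    ENNReal.ofReal (entryNorm N ^ ε) ≤ ∑ i, ∑ j, ENNReal.ofReal (N i j) ^ ε := by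
  have hsum : ENNReal.ofReal (entryNorm N) = ∑ i, ∑ j, ENNReal.ofReal (N i j) := by
    simp only [entryNorm, abs_of_nonneg (hN _ _)]
    rw [ENNReal.ofReal_sum_of_nonneg fun i _ => Finset.sum_nonneg fun j _ => hN i j]
    exact Finset.sum_congr rfl fun i _ => ENNReal.ofReal_sum_of_nonneg fun j _ => hN i j
  have hnorm : 0 ≤ entryNorm N :=
    Finset.sum_nonneg fun i _ => Finset.sum_nonneg fun j _ => abs_nonneg (N i j)
  rw [← ENNReal.ofReal_rpow_of_nonneg hnorm hε₀.le, hsum]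
  exact (ENNReal.rpow_sum_le_sum_rpow _ _ hε₀ hε₁).trans
    (Finset.sum_le_sum fun i _ => ENNReal.rpow_sum_le_sum_rpow _ _ hε₀ hε₁)

theorem ofReal_entryNorm_pow {N : Matrix (Fin d) (Fin d) ℝ} (hN : ∀ i j, 0 ≤ N i j) (n : ℕ) :
    ENNReal.ofReal (entryNorm (N ^ n)) = ∑ i, ∑ j, ((N.map ENNReal.ofReal) ^ n) i j := by
  -- `ENNReal.ofReal` is not a ring hom, so factor both sides through the `ℝ≥0`-matrix `N'`.
  set N' : Matrix (Fin d) (Fin d) ℝ≥0 := N.map Real.toNNReal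
  have hN' : N = N'.map NNReal.toRealHom := by
    ext i j
    simp [N', Real.coe_toNNReal _ (hN i j)]
  have hN'' : N.map ENNReal.ofReal = N'.map ENNReal.ofNNRealHom := rfl
  rw [hN'', ← Matrix.map_pow, hN', ← Matrix.map_pow]
  simp only [entryNorm, Matrix.map_apply, NNReal.coe_toRealHom, NNReal.abs_eq,
    ← NNReal.coe_sum, ENNReal.ofReal_coe_nnreal, ENNReal.ofNNReal_finsetSum]
  rfl

theorem lintegral_ofReal_entryNorm_rpow_le {μ : Measure Ω} {X : Ω → Matrix (Fin d) (Fin d) ℝ}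
    (hX₀ : ∀ᵐ ω ∂μ, ∀ i j, 0 ≤ X ω i j) (hX : ∀ i j, Measurable fun ω => X ω i j)
    {ε : ℝ} (hε₀ : 0 < ε) (hε₁ : ε ≤ 1) :
    ∫⁻ ω, ENNReal.ofReal (entryNorm (X ω) ^ ε) ∂μ ≤ ∑ i, ∑ j, rpowMoment μ ε X i j := by
  have hφ : ∀ i j, Measurable fun ω => ENNReal.ofReal (X ω i j) ^ ε := fun i j =>
    (ENNReal.measurable_ofReal.comp (hX i j)).pow_const ε
  calc ∫⁻ ω, ENNReal.ofReal (entryNorm (X ω) ^ ε) ∂μ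
      ≤ ∫⁻ ω, ∑ i, ∑ j, ENNReal.ofReal (X ω i j) ^ ε ∂μ :=
        lintegral_mono_ae (hX₀.mono fun ω hω => ofReal_entryNorm_rpow_le hω hε₀ hε₁)
    _ = ∑ i, ∑ j, rpowMoment μ ε X i j := by
        rw [lintegral_finsetSum _ fun i _ => Finset.measurable_sum _ fun j _ => hφ i j]
        exact Finset.sum_congr rfl fun i _ => lintegral_finsetSum _ fun j _ => hφ i j

theorem rpowMoment_eq_map_ofReal_integral {μ : Measure Ω} {X : Ω → Matrix (Fin d) (Fin d) ℝ}
    {ε : ℝ} (hε₀ : 0 < ε) (hX₀ : ∀ i j, ∀ᵐ ω ∂μ, 0 ≤ X ω i j)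
    (hX : ∀ i j, Integrable (fun ω => X ω i j ^ ε) μ) :
    rpowMoment μ ε X = (Matrix.of fun i j => ∫ ω, X ω i j ^ ε ∂μ).map ENNReal.ofReal := by
  ext i j
  rw [Matrix.map_apply, Matrix.of_apply, ofReal_integral_eq_lintegral_ofReal (hX i j)
    ((hX₀ i j).mono fun ω h => Real.rpow_nonneg h ε)]
  refine lintegral_congr_ae ((hX₀ i j).mono fun ω h => ?_)
  exact ENNReal.ofReal_rpow_of_nonneg h hε₀.le

theorem measurable_apply_comap_ofSymm {α : Type*} (X : α → Matrix (Fin d) (Fin d) ℝ)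
    (i j : Fin d) :
    Measurable[MeasurableSpace.comap (fun ω => Matrix.of.symm (X ω)) inferInstance]
      fun ω => X ω i j :=
  Measurable.comp (g := fun M : Fin d → Fin d → ℝ => M i j) (measurable_pi_apply i).eval
    (comap_measurable fun ω => Matrix.of.symm (X ω))

theorem measurable_piProd_apply_iSup_comap {α : Type*} (A : ℤ → α → Matrix (Fin d) (Fin d) ℝ)
    (t : ℤ) (n : ℕ) (i j : Fin d) :
    Measurable[⨆ k ∈ Set.Ioc (t - n) t,
        MeasurableSpace.comap (fun ω => Matrix.of.symm (A k ω)) inferInstance]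
      fun ω => PiProd A t n ω i j := by
  induction n generalizing i j with
  | zero => exact measurable_const
  | succ n ih =>
    simp only [PiProd, Matrix.mul_apply]
    refine Finset.measurable_sum _ fun k _ => Measurable.mul ?_ ?_
    · exact (ih i k).mono (biSup_mono fun s hs => ⟨by push_cast; linarith [hs.1], hs.2⟩) le_rfl
    · have hmem : t - n ∈ Set.Ioc (t - (n + 1 : ℕ)) t := by constructor <;> push_cast <;> linarith
      exact (measurable_apply_comap_ofSymm (A (t - n)) k j).mono
        (le_biSup (fun s => MeasurableSpace.comap (fun ω => Matrix.of.symm (A s ω)) inferInstance)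
          hmem) le_rfl

theorem piProd_nonneg {μ : Measure Ω} {A : ℤ → Ω → Matrix (Fin d) (Fin d) ℝ}
    (hA : ∀ t i j, ∀ᵐ ω ∂μ, 0 ≤ A t ω i j) (t : ℤ) (n : ℕ) :
    ∀ᵐ ω ∂μ, ∀ i j, 0 ≤ PiProd A t n ω i j := by
  induction n with
  | zero =>
    filter_upwards with ω i j
    simp only [PiProd, Matrix.one_apply]
    split_ifs <;> norm_num
  | succ n ih =>
    have hAn : ∀ᵐ ω ∂μ, ∀ a b, 0 ≤ A (t - n) ω a b :=
      ae_all_iff.2 fun a => ae_all_iff.2 fun b => hA _ a b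
    filter_upwards [ih, hAn] with ω hP hAω i j
    simp only [PiProd, Matrix.mul_apply]
    exact Finset.sum_nonneg fun k _ => mul_nonneg (hP i k) (hAω k j)

namespace IIDMat

variable {μ : Measure Ω} {A : ℤ → Ω → Matrix (Fin d) (Fin d) ℝ}

theorem measurable (hiid : IIDMat μ A) (t : ℤ) : Measurable fun ω => Matrix.of.symm (A t ω) :=
  measurable_pi_lambda _ fun i => measurable_pi_lambda _ fun j => hiid.1 t i j

theorem measurable_piProd_apply (hiid : IIDMat μ A) (t : ℤ) (n : ℕ) (i j : Fin d) :
    Measurable fun ω => PiProd A t n ω i j :=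
  (measurable_piProd_apply_iSup_comap A t n i j).mono
    (iSup₂_le fun s _ => (hiid.measurable s).comap_le) le_rfl

theorem indepFun_piProd_apply (hiid : IIDMat μ A) (t : ℤ) (n : ℕ) (i k j : Fin d) :
    IndepFun (fun ω => PiProd A t n ω i k) (fun ω => A (t - n) ω k j) μ := by
  have hindep := indep_iSup_of_disjoint (fun s => (hiid.measurable s).comap_le) hiid.2.1.iIndep
    (S := Set.Ioc (t - n) t) (T := {t - n}) (by simp)
  rw [IndepFun_iff_Indep]
  refine indep_of_indep_of_le_left (indep_of_indep_of_le_right hindep ?_) ?_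
  · simp only [iSup_singleton]
    exact (measurable_apply_comap_ofSymm (A (t - n)) k j).comap_le
  · exact (measurable_piProd_apply_iSup_comap A t n i k).comap_le

theorem rpowMoment_eq (hiid : IIDMat μ A) (ε : ℝ) (t : ℤ) :
    rpowMoment μ ε (A t) = rpowMoment μ ε (A 0) := by
  ext i j
  have hident :
      IdentDistrib (fun ω => Matrix.of.symm (A t ω)) (fun ω => Matrix.of.symm (A 0 ω)) μ μ :=
    ⟨(hiid.measurable t).aemeasurable, (hiid.measurable 0).aemeasurable, hiid.2.2 t⟩
  have hentry : Measurable fun M : Fin d → Fin d → ℝ => ENNReal.ofReal (M i j) ^ ε :=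
    (ENNReal.measurable_ofReal.comp (measurable_pi_apply i).eval).pow_const ε
  exact (hident.comp hentry).lintegral_eq

theorem rpowMoment_piProd_le [IsProbabilityMeasure μ] (hiid : IIDMat μ A)
    (hA₀ : ∀ t i j, ∀ᵐ ω ∂μ, 0 ≤ A t ω i j) {ε : ℝ} (hε₀ : 0 < ε) (hε₁ : ε ≤ 1) (t : ℤ)
    (n : ℕ) (i j : Fin d) :
    rpowMoment μ ε (PiProd A t n) i j ≤ (rpowMoment μ ε (A 0) ^ n) i j := by
  induction n generalizing i j with
  | zero =>
    rcases eq_or_ne i j with rfl | hij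
    · simp [rpowMoment, PiProd]
    · simp [rpowMoment, PiProd, hij, ENNReal.zero_rpow_of_pos hε₀]
  | succ n ih =>
    calc rpowMoment μ ε (PiProd A t (n + 1)) i j
        ≤ (rpowMoment μ ε (PiProd A t n) * rpowMoment μ ε (A (t - n))) i j :=
          rpowMoment_mul_le (piProd_nonneg hA₀ t n)
            (ae_all_iff.2 fun k => ae_all_iff.2 fun j => hA₀ _ k j)
            (fun i k => (hiid.measurable_piProd_apply t n i k).aemeasurable)
            (fun k j => (hiid.1 _ k j).aemeasurable) (hiid.indepFun_piProd_apply t n) hε₀ hε₁ i j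
      _ ≤ (rpowMoment μ ε (A 0) ^ n * rpowMoment μ ε (A 0)) i j := by
          simp only [hiid.rpowMoment_eq, Matrix.mul_apply]
          gcongr with k
          exact ih i k
      _ = (rpowMoment μ ε (A 0) ^ (n + 1)) i j := by rw [pow_succ]

end IIDMat

theorem moment_of_product_le_power_of_mean_general
    (μ : Measure Ω) [IsProbabilityMeasure μ]
    (A : ℤ → Ω → Matrix (Fin d) (Fin d) ℝ)
    (hiid : IIDMat μ A)
    (hA_nonneg : ∀ t : ℤ, ∀ i j, ∀ᵐ ω ∂μ, 0 ≤ A t ω i j)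
    (ε : ℝ) (hε₀ : 0 < ε) (hε₁ : ε ≤ 1)
    (hmom : ∀ i j, Integrable (fun ω => A 0 ω i j ^ ε) μ)
    (n : ℕ) :
    ∫⁻ ω, ENNReal.ofReal (entryNorm (PiProd A 0 n ω) ^ ε) ∂μ
      ≤ ENNReal.ofReal
          (entryNorm ((Matrix.of fun i j => ∫ ω, A 0 ω i j ^ ε ∂μ) ^ n)) := by
  have hmean₀ : ∀ i j, 0 ≤ (Matrix.of fun i j => ∫ ω, A 0 ω i j ^ ε ∂μ) i j := fun i j =>
    integral_nonneg_of_ae ((hA_nonneg 0 i j).mono fun ω h => Real.rpow_nonneg h ε)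
  calc ∫⁻ ω, ENNReal.ofReal (entryNorm (PiProd A 0 n ω) ^ ε) ∂μ
      ≤ ∑ i, ∑ j, rpowMoment μ ε (PiProd A 0 n) i j :=
        lintegral_ofReal_entryNorm_rpow_le (piProd_nonneg hA_nonneg 0 n)
          (hiid.measurable_piProd_apply 0 n) hε₀ hε₁
    _ ≤ ∑ i, ∑ j, (rpowMoment μ ε (A 0) ^ n) i j := by
        gcongr with i _ j _
        exact hiid.rpowMoment_piProd_le hA_nonneg hε₀ hε₁ 0 n i j
    _ = _ := by
        rw [rpowMoment_eq_map_ofReal_integral hε₀ (hA_nonneg 0) hmom, ofReal_entryNorm_pow hmean₀]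

/-- `E[‖Π_n‖₁^ε] ≤ ‖(E[A^(ε)])^n‖₁` for i.i.d. nonnegative random matrices
and `0 < ε ≤ 1`. -/
theorem moment_of_product_le_power_of_mean
    (μ : Measure Ω) [IsProbabilityMeasure μ] (hd : 1 ≤ d)
    (A : ℤ → Ω → Matrix (Fin d) (Fin d) ℝ)
    (hiid : IIDMat μ A)
    (hA_nonneg : ∀ t : ℤ, ∀ i j, ∀ᵐ ω ∂μ, 0 ≤ A t ω i j)
    (ε : ℝ) (hε₀ : 0 < ε) (hε₁ : ε ≤ 1)
    (hmom : ∀ i j, Integrable (fun ω => A 0 ω i j ^ ε) μ)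
    (n : ℕ) :
    ∫⁻ ω, ENNReal.ofReal (entryNorm (PiProd A 0 n ω) ^ ε) ∂μ
      ≤ ENNReal.ofReal
          (entryNorm ((Matrix.of fun i j => ∫ ω, A 0 ω i j ^ ε ∂μ) ^ n)) :=
  moment_of_product_le_power_of_mean_general μ A hiid hA_nonneg ε hε₀ hε₁ hmom n

end TriSRE
end

section
/- Let X and Y be independent random variables with X ≥ 0 a.s., and let α > 0. Assume that limsup_{x→∞} x^α P(Y > x) < M for some constant M > 0, and that E[X^{α+ε}] < ∞ for some ε > 0. Then limsup_{x→∞} x^α P(X·Y > x) ≤ M · E[X^α]. -/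
open MeasureTheory ProbabilityTheory Filter Set
open scoped ENNReal Topology

/-!
Let `ν` and `ρ` be the laws of `X` and `Y`, and choose `x₀ > 0` such that
`y ^ α ρ(y, ∞) ≤ M` for `y ≥ x₀`. Conditioning on `X = s`, the contribution of
`s ≤ x / x₀` to `x ^ α P(XY > x)` is `s ^ α (x / s) ^ α ρ(x / s, ∞) ≤ M s ^ α`, while the
contribution of `s > x / x₀` is at most `x ^ α ν(x / x₀, ∞)`. Hence
`x ^ α P(XY > x) ≤ M E[X ^ α] + x ^ α P(X > x / x₀)`, and by Markov's inequality for the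
moment of order `α + ε` the last term is `O(x ^ (-ε))`.
-/

lemma ProbabilityTheory.IndepFun.measure_lt_mul {Ω : Type*} [MeasurableSpace Ω] {μ : Measure Ω}
    [IsFiniteMeasure μ] {X Y : Ω → ℝ} (hX : Measurable X) (hY : Measurable Y)
    (hXY : IndepFun X Y μ) (x : ℝ) :
    μ {ω | x < X ω * Y ω} = ((μ.map X).prod (μ.map Y)) {p | x < p.1 * p.2} := by
  rw [← (indepFun_iff_map_prod_eq_prod_map_map hX.aemeasurable hY.aemeasurable).mp hXY,
    Measure.map_apply (s := {p : ℝ × ℝ | x < p.1 * p.2}) (hX.prodMk hY)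
      (measurableSet_lt measurable_const measurable_mul)]
  rfl

lemma MeasureTheory.Integrable.rpow_of_le {Ω : Type*} [MeasurableSpace Ω] {μ : Measure Ω}
    [IsFiniteMeasure μ] {X : Ω → ℝ} {α β : ℝ} (hX : Measurable X) (hX₀ : ∀ᵐ ω ∂μ, 0 ≤ X ω)
    (hα : 0 ≤ α) (hαβ : α ≤ β) (hint : Integrable (fun ω => X ω ^ β) μ) :
    Integrable (fun ω => X ω ^ α) μ := by
  refine ((integrable_const 1).add hint).mono' (hX.pow_const α).aestronglyMeasurable ?_
  filter_upwards [hX₀] with ω hω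
  rw [Real.norm_of_nonneg (Real.rpow_nonneg hω α), Pi.add_apply]
  rcases le_or_gt (X ω) 1 with h1 | h1
  · linarith [Real.rpow_le_one hω h1 hα, Real.rpow_nonneg hω β]
  · linarith [Real.rpow_le_rpow_of_exponent_le h1.le hαβ]

lemma tendsto_rpow_mul_measure_Ioi_atTop {ν : Measure ℝ} {α β : ℝ} (hαβ : α < β) (hβ : 0 ≤ β)
    (hν : ∫⁻ s, ENNReal.ofReal (s ^ β) ∂ν ≠ ∞) :
    Tendsto (fun x => ENNReal.ofReal (x ^ α) * ν (Ioi x)) atTop (𝓝 0) := by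
  set C := ∫⁻ s, ENNReal.ofReal (s ^ β) ∂ν
  have hdecay : Tendsto (fun x : ℝ => ENNReal.ofReal (x ^ (α - β)) * C) atTop (𝓝 0) := by
    have h := ENNReal.Tendsto.mul_const
      (ENNReal.tendsto_ofReal (tendsto_rpow_neg_atTop (sub_pos.mpr hαβ))) (Or.inr hν)
    simpa only [neg_sub, ENNReal.ofReal_zero, zero_mul] using h
  refine tendsto_of_tendsto_of_tendsto_of_le_of_le' tendsto_const_nhds hdecay
    (Eventually.of_forall fun _ => zero_le) ?_
  filter_upwards [eventually_gt_atTop 0] with x hx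
  have hmarkov : ENNReal.ofReal (x ^ β) * ν (Ioi x) ≤ C := by
    refine le_trans ?_ (mul_meas_ge_le_lintegral₀ (f := fun s => ENNReal.ofReal (s ^ β))
      (measurable_id.pow_const β).ennreal_ofReal.aemeasurable (ENNReal.ofReal (x ^ β)))
    gcongr
    intro s hs
    exact ENNReal.ofReal_le_ofReal (Real.rpow_le_rpow hx.le (le_of_lt hs) hβ)
  calc ENNReal.ofReal (x ^ α) * ν (Ioi x)
      = ENNReal.ofReal (x ^ (α - β)) * (ENNReal.ofReal (x ^ β) * ν (Ioi x)) := by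
        rw [← mul_assoc, ← ENNReal.ofReal_mul (Real.rpow_nonneg hx.le _),
          ← Real.rpow_add hx, sub_add_cancel]
    _ ≤ ENNReal.ofReal (x ^ (α - β)) * C := by gcongr

lemma tendsto_rpow_mul_measure_Ioi_div_atTop {ν : Measure ℝ} {α β c : ℝ} (hαβ : α < β)
    (hβ : 0 ≤ β) (hc : 0 < c) (hν : ∫⁻ s, ENNReal.ofReal (s ^ β) ∂ν ≠ ∞) :
    Tendsto (fun x => ENNReal.ofReal (x ^ α) * ν (Ioi (x / c))) atTop (𝓝 0) := by
  have h := ENNReal.Tendsto.const_mul ((tendsto_rpow_mul_measure_Ioi_atTop hαβ hβ hν).comp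
    (tendsto_id.atTop_div_const hc)) (Or.inr (ENNReal.ofReal_ne_top (r := c ^ α)))
  rw [mul_zero] at h
  refine h.congr' ?_
  filter_upwards [eventually_ge_atTop 0] with x hx
  rw [Function.comp_apply, id, ← mul_assoc, ← ENNReal.ofReal_mul (Real.rpow_nonneg hc.le α),
    ← Real.mul_rpow hc.le (div_nonneg hx hc.le), mul_div_cancel₀ _ hc.ne']

lemma rpow_mul_measure_lt_mul_le {ρ : Measure ℝ} [IsZeroOrProbabilityMeasure ρ]
    {α M x₀ x s : ℝ} (hx₀ : 0 < x₀)
    (htail : ∀ y ≥ x₀, ENNReal.ofReal (y ^ α) * ρ (Ioi y) ≤ ENNReal.ofReal M)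
    (hx : 0 < x) (hs : 0 ≤ s) :
    ENNReal.ofReal (x ^ α) * ρ {t | x < s * t}
      ≤ ENNReal.ofReal M * ENNReal.ofReal (s ^ α)
        + (Ioi (x / x₀)).indicator (fun _ => ENNReal.ofReal (x ^ α)) s := by
  rcases hs.eq_or_lt with rfl | hs
  · simp [hx.not_gt]
  have hset : {t | x < s * t} = Ioi (x / s) := by
    ext t
    exact (div_lt_iff₀' hs).symm
  rw [hset]
  rcases le_or_gt s (x / x₀) with hsx | hsx
  · have hy : x₀ ≤ x / s := by rwa [le_div_iff₀ hs, mul_comm, ← le_div_iff₀ hx₀]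
    calc ENNReal.ofReal (x ^ α) * ρ (Ioi (x / s))
        = ENNReal.ofReal (s ^ α) * (ENNReal.ofReal ((x / s) ^ α) * ρ (Ioi (x / s))) := by
          rw [← mul_assoc, ← ENNReal.ofReal_mul (Real.rpow_nonneg hs.le α),
            ← Real.mul_rpow hs.le (div_nonneg hx.le hs.le), mul_div_cancel₀ _ hs.ne']
      _ ≤ ENNReal.ofReal (s ^ α) * ENNReal.ofReal M := by gcongr; exact htail _ hy
      _ ≤ _ := by rw [mul_comm]; exact le_self_add
  · rw [indicator_of_mem (show s ∈ Ioi (x / x₀) from hsx)]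
    calc ENNReal.ofReal (x ^ α) * ρ (Ioi (x / s)) ≤ ENNReal.ofReal (x ^ α) * 1 := by
          gcongr; exact prob_le_one
      _ ≤ _ := by rw [mul_one]; exact le_add_self

lemma rpow_mul_prod_lt_mul_le {ν ρ : Measure ℝ} [IsZeroOrProbabilityMeasure ρ]
    {α M x₀ x : ℝ} (hν : ∀ᵐ s ∂ν, 0 ≤ s) (hx₀ : 0 < x₀)
    (htail : ∀ y ≥ x₀, ENNReal.ofReal (y ^ α) * ρ (Ioi y) ≤ ENNReal.ofReal M) (hx : 0 < x) :
    ENNReal.ofReal (x ^ α) * (ν.prod ρ) {p | x < p.1 * p.2}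
      ≤ ENNReal.ofReal M * ∫⁻ s, ENNReal.ofReal (s ^ α) ∂ν
        + ENNReal.ofReal (x ^ α) * ν (Ioi (x / x₀)) := by
  rw [Measure.prod_apply (s := {p : ℝ × ℝ | x < p.1 * p.2})
      (measurableSet_lt measurable_const measurable_mul),
    ← lintegral_const_mul' _ _ ENNReal.ofReal_ne_top]
  calc ∫⁻ s, ENNReal.ofReal (x ^ α) * ρ {t | x < s * t} ∂ν
      ≤ ∫⁻ s, (ENNReal.ofReal M * ENNReal.ofReal (s ^ α)
          + (Ioi (x / x₀)).indicator (fun _ => ENNReal.ofReal (x ^ α)) s) ∂ν := by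
        refine lintegral_mono_ae ?_
        filter_upwards [hν] with s hs using rpow_mul_measure_lt_mul_le hx₀ htail hx hs
    _ = _ := by
        rw [lintegral_add_right _ (measurable_const.indicator measurableSet_Ioi),
          lintegral_const_mul' _ _ ENNReal.ofReal_ne_top,
          lintegral_indicator_const measurableSet_Ioi]

theorem weak_breiman_general
    {Ω : Type*} [MeasurableSpace Ω] (μ : Measure Ω) [IsProbabilityMeasure μ]
    (X Y : Ω → ℝ) (hX_meas : Measurable X) (hY_meas : Measurable Y)
    (hX_nonneg : ∀ᵐ ω ∂μ, 0 ≤ X ω)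
    (hindep : IndepFun X Y μ)
    (α : ℝ) (hα : 0 < α) (M : ℝ)
    (hY_tail : limsup (fun x : ℝ => ENNReal.ofReal (x ^ α) * μ {ω | x < Y ω}) atTop
      < ENNReal.ofReal M)
    (hX_mom : ∃ ε : ℝ, 0 < ε ∧ Integrable (fun ω => X ω ^ (α + ε)) μ) :
    limsup (fun x : ℝ => ENNReal.ofReal (x ^ α) * μ {ω | x < X ω * Y ω}) atTop
      ≤ ENNReal.ofReal (M * ∫ ω, X ω ^ α ∂μ) := by
  obtain ⟨ε, hε, hXε⟩ := hX_mom
  obtain ⟨x₀, hx₀, htail⟩ : ∃ x₀ > 0, ∀ y ≥ x₀,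
      ENNReal.ofReal (y ^ α) * μ.map Y (Ioi y) ≤ ENNReal.ofReal M := by
    obtain ⟨x₁, hx₁⟩ := eventually_atTop.mp (eventually_lt_of_limsup_lt hY_tail)
    refine ⟨max x₁ 1, by positivity, fun y hy => ?_⟩
    rw [Measure.map_apply hY_meas measurableSet_Ioi]
    exact (hx₁ y (le_of_max_le_left hy)).le
  have hlaw (β : ℝ) :
      ∫⁻ s, ENNReal.ofReal (s ^ β) ∂μ.map X = ∫⁻ ω, ENNReal.ofReal (X ω ^ β) ∂μ :=
    lintegral_map (measurable_id.pow_const β).ennreal_ofReal hX_meas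
  have hXα_nonneg : ∀ᵐ ω ∂μ, 0 ≤ X ω ^ α := hX_nonneg.mono fun ω h => Real.rpow_nonneg h α
  have hmoment : ENNReal.ofReal (∫ ω, X ω ^ α ∂μ) = ∫⁻ s, ENNReal.ofReal (s ^ α) ∂μ.map X := by
    rw [hlaw, ofReal_integral_eq_lintegral_ofReal
      (hXε.rpow_of_le hX_meas hX_nonneg hα.le (by linarith)) hXα_nonneg]
  have herr := tendsto_rpow_mul_measure_Ioi_div_atTop (ν := μ.map X) (lt_add_of_pos_right α hε)
    (by positivity) hx₀ (by rw [hlaw]; exact hXε.lintegral_lt_top.ne)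
  rw [ENNReal.ofReal_mul' (integral_nonneg_of_ae hXα_nonneg), ← add_zero (ENNReal.ofReal M * _),
    ← (tendsto_const_nhds.add herr).limsup_eq]
  refine limsup_le_limsup ?_
  filter_upwards [eventually_gt_atTop 0] with x hx
  rw [hindep.measure_lt_mul hX_meas hY_meas, hmoment]
  exact rpow_mul_prod_lt_mul_le
    ((ae_map_iff hX_meas.aemeasurable measurableSet_Ici).mpr hX_nonneg) hx₀ htail hx

/-- Lemma B.1 of the paper: a one-sided version of Breiman's lemma.
If `X ≥ 0` and `Y` are independent, `limsup_{x→∞} x^α P(Y > x) < M` and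
`E[X^(α+ε)] < ∞` for some `ε > 0`, then
`limsup_{x→∞} x^α P(X Y > x) ≤ M E[X^α]`. -/
theorem weak_breiman
    {Ω : Type*} [MeasurableSpace Ω] (μ : Measure Ω) [IsProbabilityMeasure μ]
    (X Y : Ω → ℝ) (hX_meas : Measurable X) (hY_meas : Measurable Y)
    (hX_nonneg : ∀ᵐ ω ∂μ, 0 ≤ X ω)
    (hindep : IndepFun X Y μ)
    (α : ℝ) (hα : 0 < α) (M : ℝ) (hM : 0 < M)
    (hY_tail : limsup (fun x : ℝ => ENNReal.ofReal (x ^ α) * μ {ω | x < Y ω}) atTop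
      < ENNReal.ofReal M)
    (hX_mom : ∃ ε : ℝ, 0 < ε ∧ Integrable (fun ω => X ω ^ (α + ε)) μ) :
    limsup (fun x : ℝ => ENNReal.ofReal (x ^ α) * μ {ω | x < X ω * Y ω}) atTop
      ≤ ENNReal.ofReal (M * ∫ ω, X ω ^ α ∂μ) :=
  weak_breiman_general μ X Y hX_meas hY_meas hX_nonneg hindep α hα M hY_tail hX_mom
end
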